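/- arXiv:1907.04452 — 3 statements merged into one kernel-verified Lean document; each statement's English description precedes it below -/
import Mathlib

section
/- Let M ∈ LC, write m_j := M_j/j!, and let ω_M(t) := sup_{j∈ℕ} log(t^j/M_j) for t > 0 and ω_M(0) := 0 be the associated weight function. Then ω_M satisfies the condition (there exist H, C > 0 with (ω_M^ι)_⋆(t²) ≤ C·ω_M(H·t) + C for all t ≥ 0) if and only if there exist C ∈ ℕ with C ≥ 1 and D, h > 0 such that (m_j)^{2C} ≤ D·h^j·m_{C·j} for all j ∈ ℕ. -/
open Set Filter Asymptotics MeasureTheory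
open scoped BigOperators Topology

noncomputable section

/-- The Cauchy (convolution) product of sequences of complex numbers. -/
def cauchyProd (F G : ℕ → ℂ) : ℕ → ℂ :=
  fun j => ∑ r ∈ Finset.range (j + 1), F r * G (j - r)

/-- The Hadamard (pointwise) product of sequences of complex numbers. -/
def hadamardProd (F G : ℕ → ℂ) : ℕ → ℂ := fun j => F j * G j

/-- The Roumieu weighted power-series space associated with `M`. -/
def FRoumieu (M : ℕ → ℝ) : Set (ℕ → ℂ) :=
  {F | ∃ h > (0:ℝ), ∃ C : ℝ, ∀ j : ℕ,
    ‖F j‖ * (j.factorial : ℝ) / (h ^ j * M j) ≤ C}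

/-- The Beurling weighted power-series space associated with `M`. -/
def FBeurling (M : ℕ → ℝ) : Set (ℕ → ℂ) :=
  {F | ∀ h > (0:ℝ), ∃ C : ℝ, ∀ j : ℕ,
    ‖F j‖ * (j.factorial : ℝ) / (h ^ j * M j) ≤ C}

/-- `M` is a weight sequence. -/
structure IsWeightSeq (M : ℕ → ℝ) : Prop where
  pos : ∀ j, 0 < M j
  norm : M 0 = 1
  le1 : 1 ≤ M 1
  logconvex : ∀ j : ℕ, 1 ≤ j → (M j) ^ 2 ≤ M (j - 1) * M (j + 1)
  liminf_pos : ∃ c > (0:ℝ), ∀ᶠ j : ℕ in atTop,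
    c ≤ (M j / (j.factorial : ℝ)) ^ (1 / (j : ℝ))

/-- `M` is quasianalytic: `∑ M_{j-1}/M_j = +∞`. -/
def IsQuasianalytic (M : ℕ → ℝ) : Prop :=
  ¬ Summable (fun j : ℕ => M j / M (j + 1))

/-- The Roumieu Borel image `j∞(E⁰_{M})`. -/
def borelImageR (M : ℕ → ℝ) : Set (ℕ → ℂ) :=
  {F | ∃ ε > (0:ℝ), ∃ f : ℝ → ℂ,
    ContDiffOn ℝ (⊤ : ℕ∞) f (Ioo (-ε) ε) ∧
    (∃ C > (0:ℝ), ∃ h > (0:ℝ), ∀ j : ℕ, ∀ x ∈ Ioo (-ε) ε,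
      ‖iteratedDeriv j f x‖ ≤ C * h ^ j * M j) ∧
    (∀ j : ℕ, F j = iteratedDeriv j f 0 / (j.factorial : ℝ))}

/-- The Beurling Borel image `j∞(E⁰_(M))`. -/
def borelImageB (M : ℕ → ℝ) : Set (ℕ → ℂ) :=
  {F | ∃ ε > (0:ℝ), ∃ f : ℝ → ℂ,
    ContDiffOn ℝ (⊤ : ℕ∞) f (Ioo (-ε) ε) ∧
    (∀ h > (0:ℝ), ∃ C > (0:ℝ), ∀ j : ℕ, ∀ x ∈ Ioo (-ε) ε,
      ‖iteratedDeriv j f x‖ ≤ C * h ^ j * M j) ∧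
    (∀ j : ℕ, F j = iteratedDeriv j f 0 / (j.factorial : ℝ))}

/-- A weight matrix: a family of weight sequences indexed by `λ > 0`, pointwise increasing. -/
structure IsWeightMatrix (M : ℝ → ℕ → ℝ) : Prop where
  ws : ∀ l : ℝ, 0 < l → IsWeightSeq (M l)
  mono : ∀ l k : ℝ, 0 < l → l ≤ k → ∀ j : ℕ, M l j ≤ M k j

/-- The Roumieu matrix power-series space. -/
def FRoumieuMat (N : ℝ → ℕ → ℝ) : Set (ℕ → ℂ) :=
  {F | ∃ l > (0:ℝ), ∃ h > (0:ℝ), ∃ C : ℝ, ∀ j : ℕ,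
    ‖F j‖ * (j.factorial : ℝ) / (h ^ j * N l j) ≤ C}

/-- The Beurling matrix power-series space. -/
def FBeurlingMat (N : ℝ → ℕ → ℝ) : Set (ℕ → ℂ) :=
  {F | ∀ l > (0:ℝ), ∀ h > (0:ℝ), ∃ C : ℝ, ∀ j : ℕ,
    ‖F j‖ * (j.factorial : ℝ) / (h ^ j * N l j) ≤ C}

/-- The Roumieu matrix Borel image `j∞(E⁰_{M})`. -/
def borelImageRMat (M : ℝ → ℕ → ℝ) : Set (ℕ → ℂ) :=
  {F | ∃ ε > (0:ℝ), ∃ f : ℝ → ℂ, ∃ l > (0:ℝ),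
    ContDiffOn ℝ (⊤ : ℕ∞) f (Ioo (-ε) ε) ∧
    (∃ C > (0:ℝ), ∃ h > (0:ℝ), ∀ j : ℕ, ∀ x ∈ Ioo (-ε) ε,
      ‖iteratedDeriv j f x‖ ≤ C * h ^ j * M l j) ∧
    (∀ j : ℕ, F j = iteratedDeriv j f 0 / (j.factorial : ℝ))}

/-- A non-unital subalgebra of `ℕ → ℂ` with respect to a given multiplication. -/
def IsSubalg (mul : (ℕ → ℂ) → (ℕ → ℂ) → (ℕ → ℂ)) (S : Set (ℕ → ℂ)) : Prop :=
  (0 : ℕ → ℂ) ∈ S ∧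
  (∀ x ∈ S, ∀ y ∈ S, x + y ∈ S) ∧
  (∀ c : ℂ, ∀ x ∈ S, c • x ∈ S) ∧
  (∀ x ∈ S, ∀ y ∈ S, mul x y ∈ S)

/-- `G` generates the subalgebra `S` (w.r.t. multiplication `mul`). -/
def Generates (mul : (ℕ → ℂ) → (ℕ → ℂ) → (ℕ → ℂ)) (G S : Set (ℕ → ℂ)) : Prop :=
  IsSubalg mul S ∧ G ⊆ S ∧ ∀ T : Set (ℕ → ℂ), IsSubalg mul T → G ⊆ T → S ⊆ T

/-- `B` is `𝔠`-algebrable in `(ℕ → ℂ, +, mul)`: there is a subalgebra contained in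
`B ∪ {0}` whose minimal cardinality of a generating set equals the continuum. -/
def ContinuumAlgebrable (mul : (ℕ → ℂ) → (ℕ → ℂ) → (ℕ → ℂ)) (B : Set (ℕ → ℂ)) : Prop :=
  ∃ S : Set (ℕ → ℂ), IsSubalg mul S ∧ S ⊆ B ∪ {0} ∧
    (∃ G : Set (ℕ → ℂ), Generates mul G S ∧ Cardinal.mk G = Cardinal.continuum) ∧
    (∀ G : Set (ℕ → ℂ), Generates mul G S → Cardinal.continuum ≤ Cardinal.mk G)

/-- Condition (ω0) for a weight function. -/
structure IsOmega0 (ω : ℝ → ℝ) : Prop where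
  nonneg : ∀ t, 0 ≤ ω t
  cont : ContinuousOn ω (Ici 0)
  mono : MonotoneOn ω (Ici 0)
  zero : ∀ t ∈ Icc (0:ℝ) 1, ω t = 0
  tendsto_top : Tendsto ω atTop atTop

/-- Condition (ω1): `ω(2t) = O(ω(t))` as `t → ∞`. -/
def Omega1 (ω : ℝ → ℝ) : Prop := (fun t => ω (2 * t)) =O[atTop] ω

/-- Condition (ω2): `ω(t) = O(t)` as `t → ∞`. -/
def Omega2 (ω : ℝ → ℝ) : Prop := ω =O[atTop] (fun t : ℝ => t)

/-- Condition (ω3): `log t = o(ω(t))` as `t → ∞`. -/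
def Omega3 (ω : ℝ → ℝ) : Prop := Real.log =o[atTop] ω

/-- Condition (ω4): `t ↦ ω(eᵗ)` is convex on `ℝ`. -/
def Omega4 (ω : ℝ → ℝ) : Prop := ConvexOn ℝ univ (fun t => ω (Real.exp t))

/-- `ω` is quasianalytic: `∫_1^∞ ω(t)/t² dt = +∞`. -/
def OmegaQuasianalytic (ω : ℝ → ℝ) : Prop :=
  ¬ IntegrableOn (fun t => ω t / t ^ 2) (Ici 1)

/-- The Young conjugate `φ*_ω`. -/
def youngConj (ω : ℝ → ℝ) (x : ℝ) : ℝ :=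
  sSup ((fun y => x * y - ω (Real.exp y)) '' Ici (0:ℝ))

/-- The weight matrix associated with a weight function `ω`. -/
def assocMatrix (ω : ℝ → ℝ) : ℝ → ℕ → ℝ :=
  fun l j => Real.exp ((1 / l) * youngConj ω (l * j))

/-- The Roumieu power-series space associated with a weight function `ω`. -/
def FRoumieuW (ω : ℝ → ℝ) : Set (ℕ → ℂ) :=
  {F | ∃ l > (0:ℝ), ∃ C : ℝ, ∀ j : ℕ,
    ‖F j‖ * (j.factorial : ℝ) / Real.exp ((1 / l) * youngConj ω (l * j)) ≤ C}

/-- The Roumieu Borel image `j∞(E⁰_{σ})` for a weight function `σ`. -/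
def borelImageRW (σ : ℝ → ℝ) : Set (ℕ → ℂ) :=
  {F | ∃ ε > (0:ℝ), ∃ f : ℝ → ℂ,
    ContDiffOn ℝ (⊤ : ℕ∞) f (Ioo (-ε) ε) ∧
    (∃ l > (0:ℝ), ∃ C > (0:ℝ), ∀ j : ℕ, ∀ x ∈ Ioo (-ε) ε,
      ‖iteratedDeriv j f x‖ ≤ C * Real.exp ((1 / l) * youngConj σ (l * j))) ∧
    (∀ j : ℕ, F j = iteratedDeriv j f 0 / (j.factorial : ℝ))}

/-- The lower Legendre conjugate `h_⋆(t) = inf_{s>0} (h(s) + t·s)`. -/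
def legendreLow (h : ℝ → ℝ) (t : ℝ) : ℝ :=
  sInf ((fun s => h s + t * s) '' Ioi (0:ℝ))

/-- `(ω^ι)_⋆`, the lower Legendre conjugate of `t ↦ ω(1/t)`. -/
def iotaStar (ω : ℝ → ℝ) (t : ℝ) : ℝ :=
  legendreLow (fun s => ω (1 / s)) t

/-- `M` belongs to the class `LC`. -/
def IsLCseq (M : ℕ → ℝ) : Prop :=
  (∀ j, 0 < M j) ∧ M 0 = 1 ∧ 1 ≤ M 1 ∧
  (∀ j : ℕ, 1 ≤ j → (M j) ^ 2 ≤ M (j - 1) * M (j + 1)) ∧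
  Tendsto (fun j : ℕ => (M j) ^ (1 / (j : ℝ))) atTop atTop

/-- A standard log-convex weight matrix. -/
def IsStdLCMatrix (M : ℝ → ℕ → ℝ) : Prop :=
  (∀ l : ℝ, 0 < l → IsLCseq (M l)) ∧
  (∀ l k : ℝ, 0 < l → l ≤ k → ∀ j : ℕ, M l j ≤ M k j)

/-- Condition (Roumieusquare) for a weight matrix. -/
def RoumieuSquare (M : ℝ → ℕ → ℝ) : Prop :=
  ∀ l > (0:ℝ), ∃ k > (0:ℝ), ∃ C > (0:ℝ), ∃ h > (0:ℝ), ∀ j : ℕ,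
    (M l j / (j.factorial : ℝ)) ^ 2 ≤ C * h ^ j * (M k j / (j.factorial : ℝ))

/-- Condition (Beurlingsquare) for a weight matrix. -/
def BeurlingSquare (M : ℝ → ℕ → ℝ) : Prop :=
  ∀ l > (0:ℝ), ∃ k > (0:ℝ), ∃ C > (0:ℝ), ∃ h > (0:ℝ), ∀ j : ℕ,
    (M k j / (j.factorial : ℝ)) ^ 2 ≤ C * h ^ j * (M l j / (j.factorial : ℝ))

/-- The associated weight function `ω_M` of a sequence `M`. -/
def assocWeight (M : ℕ → ℝ) (t : ℝ) : ℝ :=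
  if t = 0 then 0 else ⨆ j : ℕ, Real.log (t ^ j / M j)

namespace St17
open Real

variable {M : ℕ → ℝ}

structure Hyp (M : ℕ → ℝ) : Prop where
  pos : ∀ j, 0 < M j
  zero : M 0 = 1
  one : 1 ≤ M 1
  lc : ∀ j : ℕ, 1 ≤ j → (M j) ^ 2 ≤ M (j - 1) * M (j + 1)
  tend : Tendsto (fun j : ℕ => (M j) ^ (1 / (j : ℝ))) atTop atTop

lemma Hyp.ratio_mono (h : Hyp M) : ∀ a b : ℕ, a ≤ b → M (a+1) / M a ≤ M (b+1) / M b := by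
  intro a b hab
  induction b with
  | zero => simp_all
  | succ n ih =>
    rcases Nat.lt_or_ge a (n+1) with hl | hg
    · refine le_trans (ih (Nat.lt_succ_iff.mp hl)) ?_
      have := h.lc (n+1) (by omega)
      simp only [Nat.add_sub_cancel] at this
      rw [div_le_div_iff₀ (h.pos n) (h.pos (n+1))]
      nlinarith [h.pos n, h.pos (n+1), h.pos (n+2)]
    · have : a = n + 1 := by omega
      simp [this]

lemma Hyp.mono (h : Hyp M) : ∀ a b : ℕ, a ≤ b → M a ≤ M b := by
  intro a b hab
  induction b with
  | zero => simp_all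
  | succ n ih =>
    rcases Nat.lt_or_ge a (n+1) with hl | hg
    · refine le_trans (ih (Nat.lt_succ_iff.mp hl)) ?_
      have h1 : M 1 / M 0 ≤ M (n+1) / M n := h.ratio_mono 0 n (Nat.zero_le n)
      rw [h.zero] at h1
      simp only [div_one] at h1
      have h2 : 1 ≤ M (n+1) / M n := le_trans h.one h1
      have := h.pos n
      rw [le_div_iff₀ this] at h2
      linarith
    · have : a = n + 1 := by omega
      simp [this]

lemma Hyp.one_le (h : Hyp M) (j : ℕ) : 1 ≤ M j := by
  have := h.mono 0 j (Nat.zero_le j); rw [h.zero] at this; exact this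

/-- If all ratios up to `i` are `≤ t`, then `M i ≤ t^(i-k) * M k` for `k ≤ i`. -/
lemma Hyp.le_pow_mul (h : Hyp M) (i : ℕ) (t : ℝ)
    (h1 : ∀ l, l < i → M (l+1) / M l ≤ t) :
    ∀ k, k ≤ i → M i ≤ t ^ (i - k) * M k := by
  intro k hk
  induction i with
  | zero => simp_all
  | succ n ih =>
    rcases Nat.lt_or_ge k (n+1) with hl | hg
    · have hkn : k ≤ n := Nat.lt_succ_iff.mp hl
      have ht : M (n+1) / M n ≤ t := h1 n (Nat.lt_succ_self n)
      have hMn := h.pos n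
      have hMn1 := h.pos (n+1)
      have hrat1 : 1 ≤ M (n+1) / M n := by
        have h1' : M 1 / M 0 ≤ M (n+1) / M n := h.ratio_mono 0 n (Nat.zero_le n)
        rw [h.zero, div_one] at h1'
        exact le_trans h.one h1'
      have ht0 : 0 < t := lt_of_lt_of_le one_pos (le_trans hrat1 ht)
      have hih : M n ≤ t ^ (n - k) * M k :=
        ih (fun l hli => h1 l (Nat.lt_succ_of_lt hli)) hkn
      have hstep : M (n+1) ≤ t * M n := by
        rw [div_le_iff₀ hMn] at ht; linarith
      calc M (n+1) ≤ t * M n := hstep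
        _ ≤ t * (t ^ (n - k) * M k) := by
            apply mul_le_mul_of_nonneg_left hih (le_of_lt ht0)
        _ = t ^ (n + 1 - k) * M k := by
            rw [← mul_assoc, ← pow_succ']
            congr 2
            omega
    · have : k = n + 1 := by omega
      simp [this]

/-- ratios from `i+1` on are `≥ M (i+1)/M i`: `M i * (M(i+1)/M i)^(k-i) ≤ M k` for `k ≥ i`. -/
lemma Hyp.mul_pow_le (h : Hyp M) (i : ℕ) :
    ∀ k, i ≤ k → M i * (M (i+1) / M i) ^ (k - i) ≤ M k := by
  intro k hk
  induction k with
  | zero => simp_all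
  | succ n ih =>
    rcases Nat.lt_or_ge i (n+1) with hl | hg
    · have hin : i ≤ n := Nat.lt_succ_iff.mp hl
      have hr : M (i+1) / M i ≤ M (n+1) / M n := h.ratio_mono i n hin
      have hq0 : 0 < M (i+1) / M i := div_pos (h.pos (i+1)) (h.pos i)
      calc M i * (M (i+1) / M i) ^ (n + 1 - i)
          = (M i * (M (i+1) / M i) ^ (n - i)) * (M (i+1) / M i) := by
            rw [mul_assoc, ← pow_succ]; congr 2; omega
        _ ≤ M n * (M (n+1) / M n) := by
            apply mul_le_mul (ih hin) hr (le_of_lt hq0)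
            exact le_of_lt (h.pos n)
        _ = M (n+1) := by
            rw [mul_div_assoc']
            rw [mul_comm]
            exact mul_div_cancel_right₀ _ (ne_of_gt (h.pos n))
    · have : i = n + 1 := by omega
      simp [this]

lemma Hyp.bdd (h : Hyp M) (t : ℝ) (ht : 0 < t) :
    BddAbove (Set.range fun j : ℕ => Real.log (t ^ j / M j)) := by
  have := h.tend.eventually_ge_atTop (t + 1)
  obtain ⟨N, hN⟩ := this.exists_forall_of_atTop
  set K := max N 1 with hK
  set B := ((insert (0:ℝ) ((Finset.range K).image fun j => Real.log (t ^ j / M j))).max'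
    (by simp)) with hB
  refine ⟨B, ?_⟩
  rintro y ⟨j, rfl⟩
  rcases Nat.lt_or_ge j K with hj | hj
  · apply Finset.le_max'
    simp only [Finset.mem_insert, Finset.mem_image]
    exact Or.inr ⟨j, Finset.mem_range.mpr hj, rfl⟩
  · have hj1 : 1 ≤ j := le_trans (le_max_right N 1) hj
    have hjN : N ≤ j := le_trans (le_max_left N 1) hj
    have h1 : t + 1 ≤ (M j) ^ (1 / (j : ℝ)) := hN j hjN
    have hjR : (0:ℝ) < (j:ℝ) := by exact_mod_cast hj1
    have hMj : (t+1) ^ (j:ℕ) ≤ M j := by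
      have h2 : (t+1) ^ ((j:ℝ)) ≤ ((M j) ^ (1 / (j:ℝ))) ^ ((j:ℝ)) :=
        Real.rpow_le_rpow (by linarith) h1 (le_of_lt hjR)
      rw [← Real.rpow_natCast (t+1) j]
      rw [← Real.rpow_mul (le_of_lt (h.pos j))] at h2
      rwa [one_div_mul_cancel (ne_of_gt hjR), Real.rpow_one] at h2
    have hfrac : t ^ j / M j ≤ 1 := by
      rw [div_le_one (h.pos j)]
      calc t ^ j ≤ (t+1) ^ j := by
            apply pow_le_pow_left₀ (le_of_lt ht) (by linarith)
        _ ≤ M j := hMj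
    have : Real.log (t ^ j / M j) ≤ 0 :=
      Real.log_nonpos (le_of_lt (div_pos (pow_pos ht j) (h.pos j))) hfrac
    refine le_trans this ?_
    apply Finset.le_max'
    simp

lemma Hyp.omega_pos (h : Hyp M) (t : ℝ) (ht : 0 < t) :
    assocWeight M t = ⨆ j : ℕ, Real.log (t ^ j / M j) := by
  rw [assocWeight, if_neg (ne_of_gt ht)]

lemma Hyp.le_omega (h : Hyp M) (t : ℝ) (ht : 0 < t) (k : ℕ) :
    Real.log (t ^ k / M k) ≤ assocWeight M t := by
  rw [h.omega_pos t ht]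
  exact le_ciSup (h.bdd t ht) k

lemma Hyp.omega_nonneg (h : Hyp M) (t : ℝ) (ht : 0 ≤ t) :
    0 ≤ assocWeight M t := by
  rcases eq_or_lt_of_le ht with rfl | ht'
  · simp [assocWeight]
  · have := h.le_omega t ht' 0
    simpa [h.zero] using this

lemma Hyp.omega_le (h : Hyp M) (t B : ℝ) (ht : 0 < t)
    (hb : ∀ k : ℕ, Real.log (t ^ k / M k) ≤ B) :
    assocWeight M t ≤ B := by
  rw [h.omega_pos t ht]
  exact ciSup_le hb

/-- Main upper bound for `ω` at points in the "attainment interval" of index `i`. -/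
lemma Hyp.omega_upper (h : Hyp M) (i : ℕ) (t : ℝ) (ht : 0 < t)
    (h1 : ∀ l, l < i → M (l+1) / M l ≤ t) (h2 : t ≤ M (i+1) / M i) :
    assocWeight M t ≤ i * Real.log t - Real.log (M i) := by
  apply h.omega_le t _ ht
  intro k
  have key : t ^ k * M i ≤ t ^ i * M k := by
    rcases Nat.lt_or_ge k i with hk | hk
    · have := h.le_pow_mul i t h1 k (le_of_lt hk)
      calc t ^ k * M i ≤ t ^ k * (t ^ (i-k) * M k) := by
            apply mul_le_mul_of_nonneg_left this (by positivity)
        _ = t ^ i * M k := by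
            rw [← mul_assoc, ← pow_add]
            congr 2
            omega
    · -- k ≥ i : use mul_pow_le and h2
      have hq : M i * (M (i+1) / M i) ^ (k - i) ≤ M k := h.mul_pow_le i k hk
      have : M i * t ^ (k-i) ≤ M k := by
        refine le_trans ?_ hq
        apply mul_le_mul_of_nonneg_left _ (le_of_lt (h.pos i))
        apply pow_le_pow_left₀ (le_of_lt ht) h2
      have hsplit : t ^ k = t ^ i * t ^ (k-i) := by
        rw [← pow_add]; congr 1; omega
      calc t ^ k * M i = t ^ i * (M i * t ^ (k-i)) := by rw [hsplit]; ring
        _ ≤ t ^ i * M k := by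
            apply mul_le_mul_of_nonneg_left this (le_of_lt (pow_pos ht i))
  have hlog : Real.log (t ^ k / M k) ≤ Real.log (t ^ i / M i) :=
    Real.log_le_log (div_pos (pow_pos ht k) (h.pos k))
      (by rw [div_le_div_iff₀ (h.pos k) (h.pos i)]; linarith)
  refine le_trans hlog ?_
  rw [Real.log_div (by positivity) (ne_of_gt (h.pos i)), Real.log_pow]

lemma Hyp.iotaStar_le (h : Hyp M) (τ : ℝ) (hτ : 0 ≤ τ) (s : ℝ) (hs : 0 < s) :
    iotaStar (assocWeight M) τ ≤ assocWeight M (1/s) + τ * s := by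
  apply csInf_le
  · refine ⟨0, ?_⟩
    rintro y ⟨u, hu, rfl⟩
    simp only [Set.mem_Ioi] at hu
    have h1 : 0 ≤ assocWeight M (1/u) := h.omega_nonneg _ (by positivity)
    have h2 : 0 ≤ τ * u := mul_nonneg hτ (le_of_lt hu)
    simp only
    linarith
  · exact ⟨s, hs, rfl⟩

lemma Hyp.le_iotaStar (h : Hyp M) (τ B : ℝ)
    (hb : ∀ s : ℝ, 0 < s → B ≤ assocWeight M (1/s) + τ * s) :
    B ≤ iotaStar (assocWeight M) τ := by
  apply le_csInf ⟨_, Set.mem_image_of_mem _ (Set.mem_Ioi.mpr (one_pos (α := ℝ)))⟩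
  rintro y ⟨u, hu, rfl⟩
  exact hb u (Set.mem_Ioi.mp hu)

/-- Lower bound for the Legendre-type conjugate. -/
lemma Hyp.lemma1 (h : Hyp M) (τ : ℝ) (hτ : 0 < τ) (j : ℕ) (hj : 1 ≤ j) :
    (j:ℝ) * Real.log τ - j * Real.log j + j - Real.log (M j)
      ≤ iotaStar (assocWeight M) τ := by
  apply h.le_iotaStar τ _ ?_
  intro s hs
  have hjR : (0:ℝ) < (j:ℝ) := by exact_mod_cast hj
  have h1 : Real.log ((1/s) ^ j / M j) ≤ assocWeight M (1/s) :=
    h.le_omega (1/s) (by positivity) j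
  have h2 : Real.log ((1/s) ^ j / M j) = -((j:ℝ) * Real.log s) - Real.log (M j) := by
    rw [Real.log_div (by positivity) (ne_of_gt (h.pos j)), Real.log_pow, one_div,
      Real.log_inv]
    ring
  have h3 : (j:ℝ) * Real.log τ - j * Real.log j + j ≤ τ * s - j * Real.log s := by
    have hx : (0:ℝ) < τ * s / j := by positivity
    have h4 := Real.log_le_sub_one_of_pos hx
    have h5 : Real.log (τ * s / j) = Real.log τ + Real.log s - Real.log j := by
      rw [Real.log_div (by positivity) (ne_of_gt hjR), Real.log_mul (ne_of_gt hτ)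
        (ne_of_gt hs)]
    rw [h5] at h4
    have h6 : (j:ℝ) * (Real.log τ + Real.log s - Real.log j) ≤ j * (τ * s / j - 1) :=
      mul_le_mul_of_nonneg_left h4 (le_of_lt hjR)
    have h7 : (j:ℝ) * (τ * s / j) = τ * s := by field_simp
    nlinarith
  rw [h2] at h1
  linarith

lemma key_scalar (n y : ℝ) (hn2 : 2 ≤ n) (hy0 : 0 < y) (hy1 : y < 1)
    (hy2 : n - 1 < n * y) : n * y ≤ n * Real.log y + n + 1 := by
  have hl1 : Real.log (1/y) ≤ 1/y - 1 := Real.log_le_sub_one_of_pos (by positivity)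
  rw [one_div, Real.log_inv] at hl1
  have hl2 : 1 - 1/y ≤ Real.log y := by rw [one_div]; linarith
  have hl3 : n * (1 - 1/y) ≤ n * Real.log y :=
    mul_le_mul_of_nonneg_left hl2 (by linarith)
  have e1 : n * (1-y) < 1 := by nlinarith
  have e2 : n * (1-y)^2 < (1-y) := by nlinarith
  have hl4 : n * (1-y)^2 ≤ y := by nlinarith
  have hl5 : n * y ≤ n * (1 - 1/y) + n + 1 := by
    rw [← sub_nonneg]
    have hrw : n * (1 - 1/y) + n + 1 - n*y = (y - n*(1-y)^2)/y := by
      field_simp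
      ring
    rw [hrw]
    exact div_nonneg (by linarith) (le_of_lt hy0)
  linarith

/-- Upper bound on `iotaStar` at a near-optimal index. -/
lemma Hyp.lemma2 (h : Hyp M) (τ : ℝ) (hτ : M 1 ≤ τ) :
    ∃ j : ℕ, 1 ≤ j ∧ iotaStar (assocWeight M) τ ≤
      (j:ℝ) * Real.log τ - j * Real.log j + j - Real.log (M j) + 1 := by
  have hτ0 : 0 < τ := lt_of_lt_of_le (lt_of_lt_of_le one_pos h.one) hτ
  have hrat1 : ∀ i : ℕ, 1 ≤ M (i+1) / M i := by
    intro i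
    have h1' : M 1 / M 0 ≤ M (i+1) / M i := h.ratio_mono 0 i (Nat.zero_le i)
    rw [h.zero, div_one] at h1'
    exact le_trans h.one h1'
  set S : Set ℕ := {i : ℕ | ((i:ℝ)+1) * (M (i+1) / M i) ≤ τ} with hS
  have h0S : 0 ∈ S := by
    simp only [hS, Set.mem_setOf_eq, Nat.cast_zero, zero_add, one_mul, h.zero, div_one]
    exact hτ
  have hbddS : BddAbove S := by
    refine ⟨Nat.ceil τ, ?_⟩
    intro i hi
    simp only [hS, Set.mem_setOf_eq] at hi
    have h2 : (i:ℝ) ≤ τ := by nlinarith [hrat1 i]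
    have h3 : (i:ℝ) ≤ (Nat.ceil τ : ℝ) := le_trans h2 (Nat.le_ceil τ)
    exact_mod_cast h3
  set b := sSup S with hb
  have hbS : b ∈ S := Nat.sSup_mem ⟨0, h0S⟩ hbddS
  have hbS1 : b + 1 ∉ S := by
    intro hmem
    have := le_csSup hbddS hmem
    omega
  have F1 : ((b:ℝ)+1) * (M (b+1) / M b) ≤ τ := hbS
  have F2 : τ < ((b:ℝ)+2) * (M (b+2) / M (b+1)) := by
    by_contra hcon
    push_neg at hcon
    apply hbS1
    simp only [hS, Set.mem_setOf_eq]
    push_cast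
    convert hcon using 2 <;> push_cast
    · rfl
    · ring
  have hbpos : (0:ℝ) < (b:ℝ) + 1 := by positivity
  have hμ1 : 0 < M (b+1) / M b := div_pos (h.pos (b+1)) (h.pos b)
  have hμ2 : 0 < M (b+2) / M (b+1) := div_pos (h.pos (b+2)) (h.pos (b+1))
  rcases le_or_gt (τ / ((b:ℝ)+1)) (M (b+2) / M (b+1)) with hA | hB
  · -- Case A : j = b+1, s = (b+1)/τ
    refine ⟨b+1, by omega, ?_⟩
    have hs : (0:ℝ) < ((b:ℝ)+1)/τ := by positivity
    have hstep := h.iotaStar_le τ (le_of_lt hτ0) _ hs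
    have h1s : 1 / (((b:ℝ)+1)/τ) = τ / ((b:ℝ)+1) := by
      rw [one_div_div]
    have hτs : τ * (((b:ℝ)+1)/τ) = (b:ℝ)+1 := by field_simp
    rw [h1s, hτs] at hstep
    set t := τ / ((b:ℝ)+1) with hT
    have ht0 : 0 < t := by positivity
    have hup : assocWeight M t ≤ ((b:ℕ)+1 : ℕ) * Real.log t - Real.log (M (b+1)) := by
      apply h.omega_upper (b+1) t ht0
      · intro l hl
        refine le_trans (h.ratio_mono l b (by omega)) ?_
        rw [le_div_iff₀ hbpos] at *
        nlinarith
      · exact le_trans (le_refl _) hA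
    have hlogt : Real.log t = Real.log τ - Real.log ((b:ℝ)+1) := by
      rw [hT, Real.log_div (ne_of_gt hτ0) (ne_of_gt hbpos)]
    push_cast at hup
    rw [hlogt] at hup
    push_cast
    nlinarith [h.omega_nonneg t (le_of_lt ht0)]
  · -- Case B : j = b+2, s = 1/μ₂
    refine ⟨b+2, by omega, ?_⟩
    set μ := M (b+2) / M (b+1) with hμ
    have hs : (0:ℝ) < 1/μ := by positivity
    have hstep := h.iotaStar_le τ (le_of_lt hτ0) _ hs
    have h1s : 1 / (1/μ) = μ := one_div_one_div μ
    have hτs : τ * (1/μ) = τ/μ := by ring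
    rw [h1s, hτs] at hstep
    have hup : assocWeight M μ ≤ ((b:ℕ)+1 : ℕ) * Real.log μ - Real.log (M (b+1)) := by
      apply h.omega_upper (b+1) μ hμ2
      · intro l hl
        exact h.ratio_mono l (b+1) (by omega)
      · exact le_refl _
    push_cast at hup
    -- abbreviations
    set n : ℝ := (b:ℝ) + 2 with hn
    have hn2 : (2:ℝ) ≤ n := by
      rw [hn]; have : (0:ℝ) ≤ (b:ℝ) := Nat.cast_nonneg b
      linarith
    set y : ℝ := τ / (n * μ) with hy
    have hy0 : 0 < y := by positivity
    have hy1 : y < 1 := by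
      rw [hy, div_lt_one (by positivity)]
      linarith [F2]
    have hy2 : n - 1 < n * y := by
      have hb1 : ((b:ℝ)+1) * μ < τ := by
        rw [lt_div_iff₀ hbpos] at hB
        nlinarith
      have : n * y = τ / μ := by rw [hy]; field_simp
      rw [this]
      rw [lt_div_iff₀ (by positivity)]
      have : (n - 1) * μ = ((b:ℝ)+1) * μ := by rw [hn]; ring
      rw [this]
      exact hb1
    have hkey : n * y ≤ n * Real.log y + n + 1 := key_scalar n y hn2 hy0 hy1 hy2
    -- now assemble
    have hlogy : Real.log y = Real.log τ - Real.log n - Real.log μ := by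
      rw [hy, Real.log_div (ne_of_gt hτ0) (by positivity), Real.log_mul (by positivity)
        (ne_of_gt (div_pos (h.pos (b+2)) (h.pos (b+1))))]
      ring
    have hny : n * y = τ / μ := by rw [hy]; field_simp
    have hlogM : Real.log (M (b+2)) = Real.log (M (b+1)) + Real.log μ := by
      rw [hμ, Real.log_div (ne_of_gt (h.pos (b+2))) (ne_of_gt (h.pos (b+1)))]
      ring
    push_cast
    rw [hlogM]
    rw [hlogy, hny] at hkey
    rw [hn] at hkey
    ring_nf at hkey hup hstep ⊢
    linarith [hkey, hup, hstep]
lemma pow_le_exp_mul_factorial (n : ℕ) :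
    (n:ℝ)^n ≤ Real.exp n * (Nat.factorial n : ℝ) := by
  induction n with
  | zero => simp
  | succ m ih =>
    rcases Nat.eq_zero_or_pos m with rfl | hm
    · simpa using Real.one_le_exp (by norm_num)
    · have hmR : (0:ℝ) < m := by exact_mod_cast hm
      have key : ((m:ℝ)+1)^m ≤ Real.exp 1 * (m:ℝ)^m := by
        have hsplit : (m:ℝ)+1 = (1 + 1/m) * m := by field_simp
        rw [hsplit, mul_pow]
        have h3 : 1 + 1/(m:ℝ) ≤ Real.exp (1/(m:ℝ)) := by
          have := Real.add_one_le_exp (1/(m:ℝ)); linarith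
        have h2 : (1 + 1/(m:ℝ))^m ≤ Real.exp 1 := by
          calc (1+1/(m:ℝ))^m ≤ (Real.exp (1/(m:ℝ)))^m :=
                pow_le_pow_left₀ (by positivity) h3 m
            _ = Real.exp (m * (1/(m:ℝ))) := (Real.exp_nat_mul _ m).symm
            _ = Real.exp 1 := by rw [mul_one_div, div_self (ne_of_gt hmR)]
        exact mul_le_mul_of_nonneg_right h2 (by positivity)
      have hfac : (Nat.factorial (m+1) : ℝ) = ((m:ℝ)+1) * (Nat.factorial m : ℝ) := by
        rw [Nat.factorial_succ]; push_cast; ring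
      have hexp : Real.exp ((m:ℕ)+1 : ℕ) = Real.exp 1 * Real.exp m := by
        push_cast
        rw [← Real.exp_add]; ring_nf
      calc ((m+1:ℕ):ℝ)^(m+1) = ((m:ℝ)+1)^m * ((m:ℝ)+1) := by push_cast; ring
        _ ≤ (Real.exp 1 * (m:ℝ)^m) * ((m:ℝ)+1) :=
            mul_le_mul_of_nonneg_right key (by positivity)
        _ ≤ (Real.exp 1 * (Real.exp m * (Nat.factorial m : ℝ))) * ((m:ℝ)+1) := by
            have := mul_le_mul_of_nonneg_left ih (le_of_lt (Real.exp_pos 1))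
            apply mul_le_mul_of_nonneg_right this (by positivity)
        _ = Real.exp ((m+1:ℕ):ℝ) * (Nat.factorial (m+1) : ℝ) := by
            rw [hfac]
            push_cast
            rw [Real.exp_add]
            ring

lemma fact_pow_le (C a j : ℕ) (hC : 1 ≤ C) (hCaj : C*a ≤ j) (haj : a ≤ j) (hj : 1 ≤ j) :
    ((Nat.factorial a : ℝ))^(2*C) ≤
      (Nat.factorial (C*a) : ℝ) * Real.exp j * (j:ℝ)^j := by
  have h0 : (Nat.factorial a : ℝ) ≤ (a:ℝ)^a := by
    exact_mod_cast Nat.factorial_le_pow a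
  have h1 : ((Nat.factorial a : ℝ))^(2*C) ≤ ((a:ℝ)^a)^(2*C) :=
    pow_le_pow_left₀ (by positivity) h0 _
  have h2 : ((a:ℝ)^a)^(2*C) = (a:ℝ)^(C*a) * (a:ℝ)^(C*a) := by
    rw [← pow_mul, ← pow_add]
    congr 1
    ring
  have h3 : (a:ℝ)^(C*a) ≤ ((C*a:ℕ):ℝ)^(C*a) := by
    apply pow_le_pow_left₀ (by positivity)
    exact_mod_cast Nat.le_mul_of_pos_left a (by omega)
  have h4 : ((C*a:ℕ):ℝ)^(C*a) ≤ Real.exp ((C*a:ℕ):ℝ) * (Nat.factorial (C*a) : ℝ) :=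
    pow_le_exp_mul_factorial (C*a)
  have h5 : Real.exp ((C*a:ℕ):ℝ) ≤ Real.exp j := by
    apply Real.exp_le_exp.mpr
    exact_mod_cast hCaj
  have h6 : (a:ℝ)^(C*a) ≤ (j:ℝ)^j := by
    calc (a:ℝ)^(C*a) ≤ (j:ℝ)^(C*a) := by
          apply pow_le_pow_left₀ (by positivity)
          exact_mod_cast haj
      _ ≤ (j:ℝ)^j := by
          apply pow_le_pow_right₀ (by exact_mod_cast hj) hCaj
  calc ((Nat.factorial a : ℝ))^(2*C) ≤ (a:ℝ)^(C*a) * (a:ℝ)^(C*a) := by rw [← h2]; exact h1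
    _ ≤ (Real.exp ((C*a:ℕ):ℝ) * (Nat.factorial (C*a) : ℝ)) * (j:ℝ)^j := by
        apply mul_le_mul (le_trans h3 h4) h6 (by positivity)
        positivity
    _ ≤ (Real.exp j * (Nat.factorial (C*a) : ℝ)) * (j:ℝ)^j := by
        apply mul_le_mul_of_nonneg_right _ (by positivity)
        apply mul_le_mul_of_nonneg_right _ (by positivity)
        exact_mod_cast h5
    _ = (Nat.factorial (C*a) : ℝ) * Real.exp j * (j:ℝ)^j := by ring

/-- Core multiplicative estimate for the `⇐` direction. -/
lemma Hyp.keyIneq (h : Hyp M) (C : ℕ) (hC : 1 ≤ C) (D hh : ℝ) (hD : 0 < D) (hhh : 0 < hh)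
    (hyp : ∀ j : ℕ, (M j / (Nat.factorial j : ℝ)) ^ (2 * C) ≤
      D * hh ^ j * (M (C * j) / (Nat.factorial (C * j) : ℝ)))
    (j : ℕ) (hj : 1 ≤ j) :
    M (j / C) ^ (2*C) * M 1 ^ (2*(j % C)) * Real.exp j ≤
      (D * M 1 ^ (2*C)) * ((1+hh) * Real.exp 1) ^ (2*j) * (j:ℝ)^j * M j := by
  set a := j / C with ha
  set r := j % C with hr
  have hj_eq : C * a + r = j := Nat.div_add_mod j C
  have hrC : r < C := Nat.mod_lt j (by omega)
  have haj : a ≤ j := Nat.div_le_self j C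
  have hCaj : C * a ≤ j := by omega
  have hfa : (0:ℝ) < (Nat.factorial a : ℝ) := by exact_mod_cast Nat.factorial_pos a
  have hfCa : (0:ℝ) < (Nat.factorial (C*a) : ℝ) := by exact_mod_cast Nat.factorial_pos (C*a)
  -- hypothesis at a
  have h1 : M a ^ (2*C) ≤ D * hh^a * (M (C*a) / (Nat.factorial (C*a) : ℝ)) *
      (Nat.factorial a : ℝ)^(2*C) := by
    have hy := hyp a
    rw [div_pow, div_le_iff₀ (by positivity)] at hy
    exact hy
  have hM1 : (1:ℝ) ≤ M 1 := h.one
  have hMpos := h.pos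
  -- chain
  have chain : M a ^ (2*C) * M 1 ^ (2*r) * Real.exp j ≤
      (D * hh^a * (M (C*a) / (Nat.factorial (C*a) : ℝ)) * (Nat.factorial a : ℝ)^(2*C))
        * M 1 ^ (2*r) * Real.exp j := by
    apply mul_le_mul_of_nonneg_right _ (le_of_lt (Real.exp_pos _))
    apply mul_le_mul_of_nonneg_right h1 (by positivity)
  have hfr : (Nat.factorial a : ℝ)^(2*C) / (Nat.factorial (C*a):ℝ) ≤ Real.exp j * (j:ℝ)^j := by
    rw [div_le_iff₀ hfCa]
    calc ((Nat.factorial a : ℝ))^(2*C)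
        ≤ (Nat.factorial (C*a) : ℝ) * Real.exp j * (j:ℝ)^j :=
          fact_pow_le C a j hC hCaj haj hj
      _ = Real.exp j * (j:ℝ)^j * (Nat.factorial (C*a):ℝ) := by ring
  have hMCaj : M (C*a) ≤ M j := h.mono _ _ hCaj
  have hM1r : M 1 ^ (2*r) ≤ M 1 ^ (2*C) :=
    pow_le_pow_right₀ hM1 (by omega)
  have hha : hh^a ≤ (1+hh)^(2*j) := by
    calc hh^a ≤ (1+hh)^a := pow_le_pow_left₀ (le_of_lt hhh) (by linarith) a
      _ ≤ (1+hh)^(2*j) := pow_le_pow_right₀ (by linarith) (by omega)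
  have main : (D * hh^a * (M (C*a) / (Nat.factorial (C*a) : ℝ)) * (Nat.factorial a : ℝ)^(2*C))
        * M 1 ^ (2*r) * Real.exp j ≤
      (D * (1+hh)^(2*j)) * (M j * (Real.exp j * (j:ℝ)^j)) * M 1 ^ (2*C) * Real.exp j := by
    have e1 : D * hh^a * (M (C*a) / (Nat.factorial (C*a) : ℝ)) * (Nat.factorial a : ℝ)^(2*C)
        = (D * hh^a) * (M (C*a) * ((Nat.factorial a : ℝ)^(2*C) / (Nat.factorial (C*a):ℝ))) := by
      ring
    rw [e1]
    have e2 : M (C*a) * ((Nat.factorial a : ℝ)^(2*C) / (Nat.factorial (C*a):ℝ))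
        ≤ M j * (Real.exp j * (j:ℝ)^j) := by
      apply mul_le_mul hMCaj hfr (by positivity) (le_of_lt (h.pos j))
    apply mul_le_mul_of_nonneg_right _ (le_of_lt (Real.exp_pos _))
    apply mul_le_mul _ hM1r (by positivity) ?hp0
    case hp0 =>
      have := h.pos j
      positivity
    apply mul_le_mul _ e2 ?hp1 ?hp2
    · exact mul_le_mul_of_nonneg_left hha (le_of_lt hD)
    case hp1 =>
      have := h.pos (C*a)
      positivity
    case hp2 =>
      have := h.pos j
      positivity
  have rhs_eq : (D * (1+hh)^(2*j)) * (M j * (Real.exp j * (j:ℝ)^j)) * M 1 ^ (2*C) * Real.exp j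
      = (D * M 1 ^ (2*C)) * ((1+hh) * Real.exp 1) ^ (2*j) * (j:ℝ)^j * M j := by
    rw [mul_pow]
    have : (Real.exp 1)^(2*j) = Real.exp j * Real.exp j := by
      rw [← Real.exp_nat_mul]
      rw [← Real.exp_add]
      congr 1
      push_cast
      ring
    rw [this]
    ring
  calc M a ^ (2*C) * M 1 ^ (2*r) * Real.exp j
      ≤ (D * hh^a * (M (C*a) / (Nat.factorial (C*a) : ℝ)) * (Nat.factorial a : ℝ)^(2*C))
        * M 1 ^ (2*r) * Real.exp j := chain
    _ ≤ (D * (1+hh)^(2*j)) * (M j * (Real.exp j * (j:ℝ)^j)) * M 1 ^ (2*C) * Real.exp j := main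
    _ = (D * M 1 ^ (2*C)) * ((1+hh) * Real.exp 1) ^ (2*j) * (j:ℝ)^j * M j := rhs_eq

/-- Per-(j,t) bound for the `⇐` direction. -/
lemma Hyp.Fbound (h : Hyp M) (C : ℕ) (hC : 1 ≤ C) (D hh : ℝ) (hD : 0 < D) (hhh : 0 < hh)
    (hyp : ∀ j : ℕ, (M j / (Nat.factorial j : ℝ)) ^ (2 * C) ≤
      D * hh ^ j * (M (C * j) / (Nat.factorial (C * j) : ℝ)))
    (j : ℕ) (hj : 1 ≤ j) (t : ℝ) (ht : 0 < t) :
    (j:ℝ) * Real.log (t^2) - j * Real.log j + j - Real.log (M j) + 1 ≤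
      (4*C) * assocWeight M (((1+hh) * Real.exp 1)*t) +
        (Real.log (D * M 1 ^ (2*C)) + 1) := by
  set H := (1+hh) * Real.exp 1 with hH
  have hHpos : 0 < H := by positivity
  have hHt : 0 < H * t := by positivity
  set W := assocWeight M (H*t) with hW
  have hW0 : 0 ≤ W := h.omega_nonneg _ (le_of_lt hHt)
  set a := j / C with ha
  set r := j % C with hr
  have hj_eq : C * a + r = j := Nat.div_add_mod j C
  -- witnesses
  have Ta : (a:ℝ) * Real.log (H*t) - Real.log (M a) ≤ W := by
    have := h.le_omega (H*t) hHt a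
    rwa [Real.log_div (by positivity) (ne_of_gt (h.pos a)), Real.log_pow] at this
  have T1 : Real.log (H*t) - Real.log (M 1) ≤ W := by
    have := h.le_omega (H*t) hHt 1
    rwa [Real.log_div (by positivity) (ne_of_gt (h.pos 1)), Real.log_pow,
      Nat.cast_one, one_mul] at this
  have S1 : (2*C:ℝ) * ((a:ℝ) * Real.log (H*t) - Real.log (M a))
      + (2*r:ℝ) * (Real.log (H*t) - Real.log (M 1)) ≤ (4*C:ℝ) * W := by
    have b1 : (2*C:ℝ) * ((a:ℝ) * Real.log (H*t) - Real.log (M a)) ≤ (2*C:ℝ) * W :=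
      mul_le_mul_of_nonneg_left Ta (by positivity)
    have b2 : (2*r:ℝ) * (Real.log (H*t) - Real.log (M 1)) ≤ (2*r:ℝ) * W :=
      mul_le_mul_of_nonneg_left T1 (by positivity)
    have b3 : (2*C:ℝ) * W + (2*r:ℝ) * W ≤ (4*C:ℝ) * W := by
      have hrC : r ≤ C := le_of_lt (Nat.mod_lt j (by omega))
      have : ((2*C:ℝ) + (2*r:ℝ)) ≤ (4*C:ℝ) := by
        have : (r:ℝ) ≤ (C:ℝ) := by exact_mod_cast hrC
        linarith
      nlinarith
    linarith
  -- key log inequality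
  have klog : (2*C:ℝ) * Real.log (M a) + (2*r:ℝ) * Real.log (M 1) + (j:ℝ) ≤
      Real.log (D * M 1 ^ (2*C)) + (2*j:ℝ) * Real.log H + (j:ℝ) * Real.log j
        + Real.log (M j) := by
    have hk := h.keyIneq C hC D hh hD hhh hyp j hj
    have hM1p := h.pos 1
    have hMap := h.pos a
    have hMjp := h.pos j
    have hjRp : (0:ℝ) < (j:ℝ)^j := pow_pos (by exact_mod_cast hj) j
    have hLpos : 0 < M a ^ (2*C) * M 1 ^ (2*(j % C)) * Real.exp j := by positivity
    have hlog := Real.log_le_log hLpos hk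
    rw [Real.log_mul (by positivity) (ne_of_gt (Real.exp_pos _)),
      Real.log_mul (by positivity) (by positivity),
      Real.log_pow, Real.log_pow, Real.log_exp] at hlog
    rw [Real.log_mul (ne_of_gt (by positivity)) (ne_of_gt hMjp),
      Real.log_mul (ne_of_gt (by positivity)) (ne_of_gt hjRp),
      Real.log_mul (by positivity) (ne_of_gt (pow_pos (by positivity) (2*j))),
      Real.log_pow, Real.log_pow, ← hH] at hlog
    push_cast at hlog ⊢
    linarith
  -- arithmetic rewrites
  have hLHt : Real.log (H*t) = Real.log H + Real.log t :=
    Real.log_mul (ne_of_gt hHpos) (ne_of_gt ht)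
  have hlt2 : Real.log (t^2) = 2 * Real.log t := by
    rw [Real.log_pow]; push_cast; ring
  have hcast : (C:ℝ) * (a:ℝ) + (r:ℝ) = (j:ℝ) := by exact_mod_cast hj_eq
  have Xeq : (2*C:ℝ) * ((a:ℝ) * Real.log (H*t) - Real.log (M a))
      + (2*r:ℝ) * (Real.log (H*t) - Real.log (M 1))
      = (2*j:ℝ) * Real.log H + (j:ℝ) * Real.log (t^2)
        - (2*C:ℝ) * Real.log (M a) - (2*r:ℝ) * Real.log (M 1) := by
    rw [hLHt, hlt2]
    linear_combination (2*(Real.log H + Real.log t)) * hcast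
  rw [Xeq] at S1
  push_cast at S1 klog ⊢
  linarith

lemma Hyp.omega_one_le (h : Hyp M) : assocWeight M 1 ≤ 0 := by
  have := h.omega_upper 0 1 one_pos (by intro l hl; omega)
    (by rw [h.zero, div_one]; exact h.one)
  simpa [h.zero] using this

/-- Direction `⇐` of the main theorem. -/
lemma Hyp.dir_mpr (h : Hyp M) (C : ℕ) (hC : 1 ≤ C) (D hh : ℝ) (hD : 0 < D) (hhh : 0 < hh)
    (hyp : ∀ j : ℕ, (M j / (Nat.factorial j : ℝ)) ^ (2 * C) ≤
      D * hh ^ j * (M (C * j) / (Nat.factorial (C * j) : ℝ))) :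
    ∃ H > (0:ℝ), ∃ C' > (0:ℝ), ∀ t : ℝ, 0 ≤ t →
      iotaStar (assocWeight M) (t^2) ≤ C' * assocWeight M (H*t) + C' := by
  set H := (1+hh) * Real.exp 1 with hH
  have hHpos : 0 < H := by positivity
  have hD1 : (1:ℝ) ≤ D := by
    have h0 := hyp 0
    simp [h.zero] at h0
    linarith
  have hM1 := h.one
  set c2 : ℝ := Real.log (D * M 1 ^ (2*C)) + 1 with hc2
  have hc2_1 : 1 ≤ c2 := by
    have : (1:ℝ) ≤ D * M 1 ^ (2*C) := by
      have h1 : (1:ℝ) ≤ M 1 ^ (2*C) := one_le_pow₀ hM1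
      nlinarith
    have := Real.log_nonneg this
    rw [hc2]; linarith
  set C' : ℝ := 4*C + c2 + M 1 + 1 with hC'
  have hC'0 : 0 < C' := by
    rw [hC']
    have : (0:ℝ) ≤ (C:ℝ) := Nat.cast_nonneg C
    linarith
  have h4C : (4*C:ℝ) ≤ C' := by
    rw [hC']; linarith
  have hM1C' : M 1 ≤ C' := by
    rw [hC']
    have : (0:ℝ) ≤ (C:ℝ) := Nat.cast_nonneg C
    linarith
  have hc2C' : c2 ≤ C' := by
    rw [hC']
    have : (0:ℝ) ≤ (C:ℝ) := Nat.cast_nonneg C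
    linarith
  refine ⟨H, hHpos, C', hC'0, ?_⟩
  intro t ht
  have hWt0 : 0 ≤ assocWeight M (H*t) := h.omega_nonneg _ (by positivity)
  have hCW : (4*C:ℝ) * assocWeight M (H*t) ≤ C' * assocWeight M (H*t) :=
    mul_le_mul_of_nonneg_right h4C hWt0
  rcases lt_or_ge (t^2) (M 1) with hsm | hbg
  · -- small t
    have base := h.iotaStar_le (t^2) (sq_nonneg t) 1 one_pos
    rw [div_one, mul_one] at base
    have := h.omega_one_le
    have hnn := mul_nonneg (le_of_lt hC'0) hWt0
    linarith
  · -- large t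
    have ht0 : 0 < t := by
      rcases eq_or_lt_of_le ht with rfl | h'
      · exfalso
        simp only [ne_eq, OfNat.ofNat_ne_zero, not_false_eq_true, zero_pow] at hbg
        linarith
      · exact h'
    obtain ⟨j, hj1, hjb⟩ := h.lemma2 (t^2) hbg
    have F := h.Fbound C hC D hh hD hhh hyp j hj1 t ht0
    rw [← hH, ← hc2] at F
    linarith

lemma fact2 (n i : ℕ) (hn : 1 ≤ n) (hi : 1 ≤ i) :
    ((n*i:ℕ):ℝ)^(n*i) * Real.exp (-((n*i:ℕ):ℝ)) * (Nat.factorial (n*i) : ℝ)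
      ≤ ((n:ℝ)^(2*n) * Real.exp n)^i * ((Nat.factorial i : ℝ))^(2*n) := by
  have hnR : (0:ℝ) < n := by exact_mod_cast hn
  have hiR : (0:ℝ) < i := by exact_mod_cast hi
  have f1 : (Nat.factorial (n*i) : ℝ) ≤ ((n*i:ℕ):ℝ)^(n*i) := by
    exact_mod_cast Nat.factorial_le_pow (n*i)
  have step1 : ((n*i:ℕ):ℝ)^(n*i) * Real.exp (-((n*i:ℕ):ℝ)) * (Nat.factorial (n*i) : ℝ)
      ≤ (((n*i:ℕ):ℝ)^(n*i) * ((n*i:ℕ):ℝ)^(n*i)) * Real.exp (-((n*i:ℕ):ℝ)) := by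
    calc ((n*i:ℕ):ℝ)^(n*i) * Real.exp (-((n*i:ℕ):ℝ)) * (Nat.factorial (n*i) : ℝ)
        ≤ ((n*i:ℕ):ℝ)^(n*i) * Real.exp (-((n*i:ℕ):ℝ)) * ((n*i:ℕ):ℝ)^(n*i) := by
          apply mul_le_mul_of_nonneg_left f1 (by positivity)
      _ = (((n*i:ℕ):ℝ)^(n*i) * ((n*i:ℕ):ℝ)^(n*i)) * Real.exp (-((n*i:ℕ):ℝ)) := by ring
  have f2 : (((n*i:ℕ):ℝ)^(n*i) * ((n*i:ℕ):ℝ)^(n*i))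
      = (n:ℝ)^(2*(n*i)) * ((i:ℝ)^i)^(2*n) := by
    push_cast
    rw [mul_pow, ← pow_mul]
    rw [show 2*(n*i) = n*i + n*i by ring, show i*(2*n) = n*i + n*i by ring]
    rw [pow_add, pow_add]
    ring
  have f3 : ((i:ℝ)^i)^(2*n) ≤ (Real.exp i * (Nat.factorial i : ℝ))^(2*n) :=
    pow_le_pow_left₀ (by positivity) (pow_le_exp_mul_factorial i) _
  have eE : Real.exp ((i:ℝ))^(2*n) * Real.exp (-((n*i:ℕ):ℝ)) = (Real.exp ((n:ℝ)))^i := by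
    rw [← Real.exp_nat_mul, ← Real.exp_nat_mul, ← Real.exp_add]
    congr 1
    push_cast
    ring
  calc ((n*i:ℕ):ℝ)^(n*i) * Real.exp (-((n*i:ℕ):ℝ)) * (Nat.factorial (n*i) : ℝ)
      ≤ (((n*i:ℕ):ℝ)^(n*i) * ((n*i:ℕ):ℝ)^(n*i)) * Real.exp (-((n*i:ℕ):ℝ)) := step1
    _ = ((n:ℝ)^(2*(n*i)) * ((i:ℝ)^i)^(2*n)) * Real.exp (-((n*i:ℕ):ℝ)) := by rw [f2]
    _ ≤ ((n:ℝ)^(2*(n*i)) * (Real.exp i * (Nat.factorial i : ℝ))^(2*n))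
          * Real.exp (-((n*i:ℕ):ℝ)) := by
        apply mul_le_mul_of_nonneg_right _ (le_of_lt (Real.exp_pos _))
        exact mul_le_mul_of_nonneg_left f3 (by positivity)
    _ = ((n:ℝ)^(2*n))^i * (Real.exp ((i:ℝ))^(2*n) * Real.exp (-((n*i:ℕ):ℝ)))
          * ((Nat.factorial i : ℝ))^(2*n) := by
        rw [mul_pow, ← pow_mul]
        ring_nf
    _ = ((n:ℝ)^(2*n))^i * (Real.exp ((n:ℝ)))^i * ((Nat.factorial i : ℝ))^(2*n) := by
        rw [eE]
    _ = ((n:ℝ)^(2*n) * Real.exp n)^i * ((Nat.factorial i : ℝ))^(2*n) := by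
        rw [mul_pow]

/-- Direction `⇒` of the main theorem. -/
lemma Hyp.dir_mp (h : Hyp M) (H C : ℝ) (hHpos : 0 < H) (hCpos : 0 < C)
    (P : ∀ t : ℝ, 0 ≤ t → iotaStar (assocWeight M) (t^2) ≤ C * assocWeight M (H*t) + C) :
    ∃ Cn : ℕ, 1 ≤ Cn ∧ ∃ D > (0:ℝ), ∃ hh > (0:ℝ), ∀ i : ℕ,
      (M i / (Nat.factorial i : ℝ))^(2*Cn) ≤
        D * hh^i * (M (Cn*i) / (Nat.factorial (Cn*i) : ℝ)) := by
  set Cn := max 1 (Nat.ceil C) with hCndef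
  have hCn1 : 1 ≤ Cn := le_max_left _ _
  have hCnR : (0:ℝ) < (Cn:ℝ) := by exact_mod_cast hCn1
  have hCCn : C ≤ (Cn:ℝ) := by
    refine le_trans (Nat.le_ceil C) ?_
    exact_mod_cast le_max_right 1 (Nat.ceil C)
  set hh : ℝ := H^(2*Cn) * ((Cn:ℝ)^(2*Cn) * Real.exp Cn) with hhdef
  have hhpos : 0 < hh := by
    apply mul_pos (pow_pos hHpos _)
    positivity
  refine ⟨Cn, hCn1, Real.exp Cn, Real.exp_pos _, hh, hhpos, ?_⟩
  intro i
  rcases Nat.eq_zero_or_pos i with rfl | hi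
  · simp only [Nat.mul_zero, Nat.factorial_zero, Nat.cast_one, h.zero, div_one, one_pow,
      pow_zero, mul_one]
    exact Real.one_le_exp (by positivity)
  · -- i ≥ 1
    set μ := M (i+1) / M i with hμdef
    have hμpos : 0 < μ := div_pos (h.pos (i+1)) (h.pos i)
    set t := μ / H with htdef
    have ht0 : 0 < t := div_pos hμpos hHpos
    have hP := P t (le_of_lt ht0)
    have hHt : H * t = μ := by
      rw [htdef]; field_simp
    rw [hHt] at hP
    have hω0 : 0 ≤ assocWeight M μ := h.omega_nonneg μ (le_of_lt hμpos)
    have hup : assocWeight M μ ≤ (i:ℝ) * Real.log μ - Real.log (M i) := by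
      have := h.omega_upper i μ hμpos (fun l hl => h.ratio_mono l i (le_of_lt hl))
        (le_refl _)
      exact this
    have hstep : C * assocWeight M μ + C ≤ (Cn:ℝ) * assocWeight M μ + Cn := by
      nlinarith [mul_nonneg (sub_nonneg.mpr hCCn) hω0]
    have hupCn : (Cn:ℝ) * assocWeight M μ ≤ (Cn:ℝ) * ((i:ℝ) * Real.log μ - Real.log (M i)) :=
      mul_le_mul_of_nonneg_left hup (le_of_lt hCnR)
    have hjj : 1 ≤ Cn * i := Nat.mul_pos hCn1 hi
    have hτpos : (0:ℝ) < t^2 := by positivity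
    have L1 := h.lemma1 (t^2) hτpos (Cn*i) hjj
    have hlogτ : Real.log (t^2) = 2 * (Real.log μ - Real.log H) := by
      rw [Real.log_pow, htdef, Real.log_div (ne_of_gt hμpos) (ne_of_gt hHpos)]
      push_cast
      ring
    rw [hlogτ] at L1
    -- M i ≤ μ^i
    have hMi : M i ≤ μ^i := by
      have := h.le_pow_mul i μ (fun l hl => h.ratio_mono l i (le_of_lt hl)) 0 (Nat.zero_le i)
      rwa [h.zero, mul_one, Nat.sub_zero] at this
    have hlogMi : Real.log (M i) ≤ (i:ℝ) * Real.log μ := by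
      have := Real.log_le_log (h.pos i) hMi
      rwa [Real.log_pow] at this
    have hlogMiCn : (Cn:ℝ) * Real.log (M i) ≤ (Cn:ℝ) * ((i:ℝ) * Real.log μ) :=
      mul_le_mul_of_nonneg_left hlogMi (le_of_lt hCnR)
    -- key exponent inequality
    have E : 2*(Cn:ℝ) * Real.log (M i) ≤
        2*((Cn*i:ℕ):ℝ) * Real.log H + ((Cn*i:ℕ):ℝ) * Real.log ((Cn*i:ℕ):ℝ)
          - ((Cn*i:ℕ):ℝ) + Real.log (M (Cn*i)) + (Cn:ℝ) := by
      push_cast at L1 hP hstep hupCn hlogMiCn ⊢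
      nlinarith [L1, hP, hstep, hupCn, hlogMiCn]
    -- exponentiate
    have Emul : M i ^ (2*Cn) ≤
        H^(2*(Cn*i)) * (((Cn*i:ℕ):ℝ)^(Cn*i) * Real.exp (-((Cn*i:ℕ):ℝ))
          * M (Cn*i) * Real.exp Cn) := by
      have hCniR : (0:ℝ) < ((Cn*i:ℕ):ℝ) := by exact_mod_cast hjj
      have hLpos : (0:ℝ) < M i ^ (2*Cn) := pow_pos (h.pos i) _
      have hP1 : (0:ℝ) < ((Cn*i:ℕ):ℝ)^(Cn*i) := pow_pos hCniR _
      have hRpos : (0:ℝ) < H^(2*(Cn*i)) * (((Cn*i:ℕ):ℝ)^(Cn*i) * Real.exp (-((Cn*i:ℕ):ℝ))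
          * M (Cn*i) * Real.exp Cn) := by
        apply mul_pos (pow_pos hHpos _)
        apply mul_pos (mul_pos (mul_pos hP1 (Real.exp_pos _)) (h.pos (Cn*i))) (Real.exp_pos _)
      rw [← Real.exp_log hRpos, ← Real.exp_log hLpos]
      apply Real.exp_le_exp.mpr
      rw [Real.log_pow]
      rw [Real.log_mul (ne_of_gt (pow_pos hHpos _)) (ne_of_gt (by
        apply mul_pos (mul_pos (mul_pos hP1 (Real.exp_pos _)) (h.pos (Cn*i))) (Real.exp_pos _)))]
      rw [Real.log_mul (ne_of_gt (mul_pos (mul_pos hP1 (Real.exp_pos _)) (h.pos (Cn*i))))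
        (ne_of_gt (Real.exp_pos _))]
      rw [Real.log_mul (ne_of_gt (mul_pos hP1 (Real.exp_pos _))) (ne_of_gt (h.pos (Cn*i)))]
      rw [Real.log_mul (ne_of_gt hP1) (ne_of_gt (Real.exp_pos _))]
      rw [Real.log_pow, Real.log_pow, Real.log_exp, Real.log_exp]
      push_cast
      push_cast at E
      linarith
    -- final division
    have hfi : (0:ℝ) < (Nat.factorial i : ℝ) := by exact_mod_cast Nat.factorial_pos i
    have hfCni : (0:ℝ) < (Nat.factorial (Cn*i) : ℝ) := by
      exact_mod_cast Nat.factorial_pos (Cn*i)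
    rw [div_pow, div_le_iff₀ (by positivity)]
    rw [show Real.exp (Cn:ℝ) * hh^i * (M (Cn*i) / (Nat.factorial (Cn*i) : ℝ))
        * (Nat.factorial i : ℝ)^(2*Cn)
      = (Real.exp (Cn:ℝ) * hh^i * M (Cn*i) * (Nat.factorial i : ℝ)^(2*Cn))
        / (Nat.factorial (Cn*i) : ℝ) by ring]
    rw [le_div_iff₀ hfCni]
    -- M i ^ (2Cn) * (Cn*i)! ≤ exp Cn * hh^i * M (Cn*i) * (i!)^(2Cn)
    have hf2 := fact2 Cn i hCn1 hi
    calc M i ^ (2*Cn) * (Nat.factorial (Cn*i) : ℝ)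
        ≤ (H^(2*(Cn*i)) * (((Cn*i:ℕ):ℝ)^(Cn*i) * Real.exp (-((Cn*i:ℕ):ℝ))
            * M (Cn*i) * Real.exp Cn)) * (Nat.factorial (Cn*i) : ℝ) :=
          mul_le_mul_of_nonneg_right Emul (le_of_lt hfCni)
      _ = (H^(2*Cn))^i * ((((Cn*i:ℕ):ℝ)^(Cn*i) * Real.exp (-((Cn*i:ℕ):ℝ))
            * (Nat.factorial (Cn*i) : ℝ))) * (M (Cn*i) * Real.exp Cn) := by
          rw [show 2*(Cn*i) = (2*Cn)*i by ring, pow_mul]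
          ring
      _ ≤ (H^(2*Cn))^i * (((Cn:ℝ)^(2*Cn) * Real.exp Cn)^i * (Nat.factorial i : ℝ)^(2*Cn))
            * (M (Cn*i) * Real.exp Cn) := by
          apply mul_le_mul_of_nonneg_right _ (by
            have := h.pos (Cn*i)
            positivity)
          apply mul_le_mul_of_nonneg_left hf2 (le_of_lt (pow_pos (pow_pos hHpos _) i))
      _ = Real.exp (Cn:ℝ) * hh^i * M (Cn*i) * (Nat.factorial i : ℝ)^(2*Cn) := by
          rw [hhdef, mul_pow]
          ring

end St17

/-- For `M ∈ LC`, the associated weight function `ω_M` satisfies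
`(ω_M^ι)_⋆(t²) ≤ C·ω_M(H·t) + C` iff `(m_j)^{2C} ≤ D·h^j·m_{C·j}` for some
`C ∈ ℕ_{≥1}` and `D, h > 0`. -/


theorem statement17 (M : ℕ → ℝ) (hM : IsLCseq M) :
    (∃ H > (0:ℝ), ∃ C > (0:ℝ), ∀ t : ℝ, 0 ≤ t →
      iotaStar (assocWeight M) (t ^ 2) ≤ C * assocWeight M (H * t) + C) ↔
    (∃ C : ℕ, 1 ≤ C ∧ ∃ D > (0:ℝ), ∃ h > (0:ℝ), ∀ j : ℕ,
      (M j / (j.factorial : ℝ)) ^ (2 * C) ≤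
        D * h ^ j * (M (C * j) / ((C * j).factorial : ℝ))) := by
  constructor
  · rintro ⟨H, hH, C, hC, P⟩
    exact (St17.Hyp.mk hM.1 hM.2.1 hM.2.2.1 hM.2.2.2.1 hM.2.2.2.2).dir_mp H C hH hC P
  · rintro ⟨C, hC, D, hD, hh, hhh, hyp⟩
    exact (St17.Hyp.mk hM.1 hM.2.1 hM.2.2.1 hM.2.2.2.1 hM.2.2.2.2).dir_mpr C hC D hh hD hhh hyp

end
end

section
/- Let M ∈ LC be such that sup_{j≥1} (M_j/j!)^{1/j} = +∞, and assume there exist C ∈ ℕ with C ≥ 1 and D, h > 0 such that (m_j)^{2C} ≤ D·h^j·m_{C·j} for all j ∈ ℕ, where m_j := M_j/j!. Then M is non-quasianalytic: ∑_{j≥1} 1/(M_j)^{1/j} < ∞ (equivalently, since M is log-convex, ∑_{j≥1} M_{j−1}/M_j < ∞). -/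
open Set Filter Asymptotics MeasureTheory
open scoped BigOperators Topology

noncomputable section

private lemma aux_pow (M : ℕ → ℝ) (hpos : ∀ j, 0 < M j)
    (h0 : M 0 = 1)
    (hlc : ∀ j : ℕ, 1 ≤ j → (M j) ^ 2 ≤ M (j - 1) * M (j + 1)) :
    ∀ j : ℕ, M j ^ (j + 1) ≤ M (j + 1) ^ j := by
  intro j
  induction j with
  | zero => simp [h0]
  | succ n ih =>
    have hlc' := hlc (n + 1) (by omega)
    simp only [Nat.add_sub_cancel] at hlc'
    have h1 : M (n+1) ^ (2*(n+1)) ≤ (M n * M (n+2)) ^ (n+1) := by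
      rw [pow_mul]
      exact pow_le_pow_left₀ (by positivity) hlc' _
    rw [mul_pow] at h1
    have h2 : M n ^ (n+1) * M (n+2) ^ (n+1) ≤ M (n+1) ^ n * M (n+2) ^ (n+1) :=
      mul_le_mul_of_nonneg_right ih (pow_nonneg (hpos _).le _)
    have h4 : M (n+1) ^ (n+1+1) * M (n+1) ^ n ≤ M (n+2) ^ (n+1) * M (n+1) ^ n := by
      calc M (n+1) ^ (n+1+1) * M (n+1) ^ n = M (n+1) ^ (2*(n+1)) := by ring
        _ ≤ M (n+1) ^ n * M (n+2) ^ (n+1) := h1.trans h2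
        _ = M (n+2) ^ (n+1) * M (n+1) ^ n := by ring
    exact le_of_mul_le_mul_right h4 (pow_pos (hpos _) _)

private lemma rpow_root_le (x y : ℝ) (hx : 0 < x) (hy : 0 < y) (p q : ℕ)
    (hp : p ≠ 0) (hq : q ≠ 0) (h : x ^ q ≤ y ^ p) :
    x ^ (1/(p:ℝ)) ≤ y ^ (1/(q:ℝ)) := by
  have hp' : ((p:ℝ)) ≠ 0 := Nat.cast_ne_zero.mpr hp
  have hq' : ((q:ℝ)) ≠ 0 := Nat.cast_ne_zero.mpr hq
  have h1 : (x ^ (1/(p:ℝ))) ^ (p*q) = x ^ q := by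
    rw [← Real.rpow_natCast (x ^ (1/(p:ℝ))) (p*q), ← Real.rpow_mul hx.le,
        ← Real.rpow_natCast x q]
    congr 1
    push_cast
    field_simp
  have h2 : (y ^ (1/(q:ℝ))) ^ (p*q) = y ^ p := by
    rw [← Real.rpow_natCast (y ^ (1/(q:ℝ))) (p*q), ← Real.rpow_mul hy.le,
        ← Real.rpow_natCast y p]
    congr 1
    push_cast
    field_simp
  have hk : p * q ≠ 0 := Nat.mul_ne_zero hp hq
  have := h1.trans_le (h.trans h2.symm.le)
  exact le_of_pow_le_pow_left₀ hk (Real.rpow_nonneg hy.le _) this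

private lemma sq_le_two_pow : ∀ n : ℕ, 6 ≤ n → (n+1)^2 ≤ 2^n := by
  intro n hn
  induction n with
  | zero => omega
  | succ k ih =>
    rcases Nat.lt_or_ge k 6 with hk | hk
    · interval_cases k <;> first | omega | norm_num
    · have := ih hk
      have h2 : (k+2)^2 ≤ 2*(k+1)^2 := by nlinarith
      calc (k+1+1)^2 = (k+2)^2 := by ring
        _ ≤ 2*(k+1)^2 := h2
        _ ≤ 2*2^k := by omega
        _ = 2^(k+1) := by rw [pow_succ]; ring

set_option maxHeartbeats 1000000 in
/-- If `M ∈ LC`, `sup_{j≥1} (m_j)^{1/j} = ∞` and `(m_j)^{2C} ≤ D·h^j·m_{C·j}` for some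
`C ∈ ℕ_{≥1}`, `D, h > 0`, then `M` is non-quasianalytic. -/
theorem statement18 (M : ℕ → ℝ) (hM : IsLCseq M)
    (hsup : ∀ B : ℝ, ∃ j : ℕ, 1 ≤ j ∧ B < (M j / (j.factorial : ℝ)) ^ (1 / (j : ℝ)))
    (hcond : ∃ C : ℕ, 1 ≤ C ∧ ∃ D > (0:ℝ), ∃ h > (0:ℝ), ∀ j : ℕ,
      (M j / (j.factorial : ℝ)) ^ (2 * C) ≤
        D * h ^ j * (M (C * j) / ((C * j).factorial : ℝ))) :
    Summable (fun j : ℕ => 1 / (M (j + 1)) ^ (1 / ((j : ℝ) + 1))) ∧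
    Summable (fun j : ℕ => M j / M (j + 1)) := by
  obtain ⟨hpos, h0, h1, hlc, _⟩ := hM
  obtain ⟨C, hC1, D, hD, h, hh, hcd⟩ := hcond
  have hmpos : ∀ j : ℕ, 0 < M j / (j.factorial : ℝ) :=
    fun j => div_pos (hpos j) (by exact_mod_cast j.factorial_pos)
  set m : ℕ → ℝ := fun j => M j / (j.factorial : ℝ) with hm
  set θ : ℝ := max D 1 * max h 1 with hθdef
  have hθ1 : 1 ≤ θ := one_le_mul_of_one_le_of_one_le (le_max_right _ _) (le_max_right _ _)
  have hθ0 : 0 < θ := lt_of_lt_of_le one_pos hθ1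
  -- step C : squaring inequality for the roots
  have stepC : ∀ j : ℕ, 1 ≤ j →
      (m j ^ (1/(j:ℝ))) ^ 2 ≤ θ * m (C*j) ^ (1/((C*j:ℕ):ℝ)) := by
    intro j hj
    have hCj : 1 ≤ C * j := Nat.one_le_iff_ne_zero.mpr (Nat.mul_ne_zero (by omega) (by omega))
    have hj' : ((j:ℝ)) ≠ 0 := Nat.cast_ne_zero.mpr (by omega)
    have hCj' : ((C*j:ℕ):ℝ) ≠ 0 := Nat.cast_ne_zero.mpr (by omega)
    have key : m j ^ (2*C) ≤ θ ^ (C*j) * m (C*j) := by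
      refine (hcd j).trans ?_
      have hD' : D ≤ (max D 1) ^ (C*j) :=
        le_trans (le_max_left _ _) (le_self_pow₀ (le_max_right _ _) (by omega))
      have hh' : h ^ j ≤ (max h 1) ^ (C*j) := by
        calc h ^ j ≤ (max h 1) ^ j := pow_le_pow_left₀ hh.le (le_max_left _ _) j
          _ ≤ (max h 1) ^ (C*j) :=
            pow_le_pow_right₀ (le_max_right _ _) (Nat.le_mul_of_pos_left j (by omega))
      calc D * h ^ j * m (C*j)
          ≤ ((max D 1) ^ (C*j) * (max h 1) ^ (C*j)) * m (C*j) := by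
            apply mul_le_mul_of_nonneg_right _ (hmpos _).le
            exact mul_le_mul hD' hh' (pow_nonneg hh.le _) (pow_nonneg (le_trans zero_le_one (le_max_right _ _)) _)
        _ = θ ^ (C*j) * m (C*j) := by rw [hθdef, mul_pow]
    -- take (C*j)-th roots
    have hr : (0:ℝ) ≤ 1/((C*j:ℕ):ℝ) := by positivity
    have hstep := Real.rpow_le_rpow (pow_nonneg (hmpos j).le _) key hr
    rw [← Real.rpow_natCast (m j) (2*C), ← Real.rpow_mul (hmpos j).le] at hstep
    rw [Real.mul_rpow (pow_nonneg hθ0.le _) (hmpos _).le,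
        ← Real.rpow_natCast θ (C*j), ← Real.rpow_mul hθ0.le] at hstep
    have e1 : ((2*C:ℕ):ℝ) * (1/((C*j:ℕ):ℝ)) = (1/(j:ℝ)) * 2 := by
      have hC0 : ((C:ℝ)) ≠ 0 := Nat.cast_ne_zero.mpr (by omega)
      push_cast
      field_simp
    have e2 : ((C*j:ℕ):ℝ) * (1/((C*j:ℕ):ℝ)) = 1 := mul_one_div_cancel hCj'
    rw [e1, e2, Real.rpow_one] at hstep
    calc (m j ^ (1/(j:ℝ))) ^ 2 = m j ^ ((1/(j:ℝ)) * 2) := by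
          rw [← Real.rpow_natCast (m j ^ (1/(j:ℝ))) 2, ← Real.rpow_mul (hmpos j).le]
          norm_num
          rfl
      _ ≤ θ * m (C*j) ^ (1/((C*j:ℕ):ℝ)) := hstep
  -- dispose of the case C = 1
  rcases eq_or_lt_of_le hC1 with hCeq | hC2
  · exfalso
    obtain ⟨j₀, hj₀1, hj₀⟩ := hsup (2*θ)
    have hs := stepC j₀ hj₀1
    rw [← hCeq, one_mul] at hs
    have hap : 0 < m j₀ ^ (1/(j₀:ℝ)) := Real.rpow_pos_of_pos (hmpos j₀) _
    nlinarith [hs, hj₀, hθ0, hap]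
  -- main case : C ≥ 2
  obtain ⟨j₀, hj₀1, hj₀⟩ := hsup (2*θ)
  have iter : ∀ n : ℕ, θ * 2^(2^n) ≤ m (C^n * j₀) ^ (1/((C^n * j₀:ℕ):ℝ)) := by
    intro n
    induction n with
    | zero =>
      simpa using (by linarith [hj₀] : θ * 2 ≤ m j₀ ^ (1/(j₀:ℝ)))
    | succ n ih =>
      have hjn : 1 ≤ C^n * j₀ := Nat.mul_pos (Nat.pow_pos (by omega)) hj₀1
      have hs := stepC (C^n * j₀) hjn
      have hind : C * (C^n * j₀) = C^(n+1) * j₀ := by rw [← mul_assoc, ← pow_succ']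
      rw [hind] at hs
      have h2 : (θ * 2^(2^n))^2 ≤ (m (C^n*j₀) ^ (1/((C^n * j₀:ℕ):ℝ)))^2 :=
        pow_le_pow_left₀ (by positivity) ih 2
      have eB : ((2:ℝ)^(2^n))^2 = (2:ℝ)^(2^(n+1)) := by
        rw [← pow_mul, pow_succ]
      have e : (θ * (2:ℝ)^(2^n))^2 = θ * (θ * (2:ℝ)^(2^(n+1))) := by
        rw [← eB]; ring
      rw [e] at h2
      exact le_of_mul_le_mul_left (h2.trans hs) hθ0
  -- monotonicity of j ↦ M j ^ (1/j)
  have gmono : Monotone (fun j : ℕ => M j ^ (1/(j:ℝ))) := by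
    apply monotone_nat_of_le_succ
    intro j
    cases j with
    | zero =>
      have e : (M 1) ^ (1/((1:ℕ):ℝ)) = M 1 := by norm_num
      simpa [h0, e] using h1
    | succ n =>
      exact rpow_root_le (M (n+1)) (M (n+2)) (hpos _) (hpos _) (n+1) (n+2)
        (by omega) (by omega) (aux_pow M hpos h0 hlc (n+1))
  have hag : ∀ j : ℕ, m j ^ (1/(j:ℝ)) ≤ M j ^ (1/(j:ℝ)) := by
    intro j
    apply Real.rpow_le_rpow (hmpos j).le _ (by positivity)
    exact div_le_self (hpos j).le (by exact_mod_cast j.factorial_pos)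
  -- eventual bound in ℕ
  have evb : ∀ n : ℕ, 2*(C+j₀) + 6 ≤ n → (C^(n+1) * j₀)^2 ≤ 2^(2^n) := by
    intro n hn
    have hC2p : C ≤ 2^C := (Nat.lt_two_pow_self (n := C)).le
    have hj2p : j₀ ≤ 2^j₀ := (Nat.lt_two_pow_self (n := j₀)).le
    have h1' : C^(n+1)*j₀ ≤ 2^(C*(n+1)+j₀) := by
      rw [pow_add 2 (C*(n+1)) j₀]
      exact Nat.mul_le_mul (by rw [pow_mul]; exact Nat.pow_le_pow_left hC2p (n+1)) hj2p
    have h2' : (C^(n+1)*j₀)^2 ≤ 2^(2*(C*(n+1)+j₀)) := by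
      calc (C^(n+1)*j₀)^2 ≤ (2^(C*(n+1)+j₀))^2 := Nat.pow_le_pow_left h1' 2
        _ = 2^(2*(C*(n+1)+j₀)) := by rw [← pow_mul, Nat.mul_comm]
    refine h2'.trans (Nat.pow_le_pow_right (by norm_num) ?_)
    have hlin : 2*(C*(n+1)+j₀) ≤ 2*(C+j₀)*(n+1) := by nlinarith
    have hlin2 : 2*(C+j₀)*(n+1) ≤ (n+1)^2 := by
      have : 2*(C+j₀) ≤ n+1 := by omega
      calc 2*(C+j₀)*(n+1) ≤ (n+1)*(n+1) := Nat.mul_le_mul_right _ this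
        _ = (n+1)^2 := (sq (n+1)).symm
    exact le_trans hlin (le_trans hlin2 (sq_le_two_pow n (by omega)))
  obtain ⟨N, hevb⟩ : ∃ N : ℕ, ∀ n : ℕ, N ≤ n → (C^(n+1) * j₀)^2 ≤ 2^(2^n) :=
    ⟨2*(C+j₀) + 6, evb⟩
  clear evb
  have keybound : ∀ j : ℕ, C^N * j₀ ≤ j → ((j:ℝ))^2 ≤ M j ^ (1/(j:ℝ)) := by
    intro j hj
    have hPN : C^N * j₀ ≤ j := hj
    have hCN : N < C^N * j₀ := by
      have h2N : N < 2^N := Nat.lt_two_pow_self (n := N)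
      have hCle : 2^N ≤ C^N := Nat.pow_le_pow_left hC2 N
      have : C^N ≤ C^N * j₀ := Nat.le_mul_of_pos_right _ (by omega)
      omega
    have hNle : N ≤ j := le_trans hCN.le hj
    set n := Nat.findGreatest (fun k => C^k * j₀ ≤ j) j with hn
    have hPn : C^n * j₀ ≤ j := by
      have := Nat.findGreatest_spec (P := fun k => C^k * j₀ ≤ j) hNle hPN
      rwa [← hn] at this
    have hNn : N ≤ n := by
      have := Nat.le_findGreatest (P := fun k => C^k * j₀ ≤ j) hNle hPN
      rwa [← hn] at this
    have hlt : j < C^(n+1) * j₀ := by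
      by_cases hc : n + 1 ≤ j
      · have hfg : Nat.findGreatest (fun k => C^k * j₀ ≤ j) j < n + 1 := by
          rw [← hn]; exact Nat.lt_succ_self n
        have hng := Nat.findGreatest_is_greatest hfg hc
        exact Nat.lt_of_not_le hng
      · have hjn : j ≤ n := by omega
        have : n + 1 < 2^(n+1) := Nat.lt_two_pow_self (n := n+1)
        have hCle : 2^(n+1) ≤ C^(n+1) := Nat.pow_le_pow_left hC2 (n+1)
        have : C^(n+1) ≤ C^(n+1) * j₀ := Nat.le_mul_of_pos_right _ (by omega)
        omega
    have c1 : ((j:ℝ))^2 ≤ ((C^(n+1)*j₀ : ℕ):ℝ)^2 := by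
      have : (j:ℝ) ≤ ((C^(n+1)*j₀:ℕ):ℝ) := by exact_mod_cast hlt.le
      exact pow_le_pow_left₀ (by positivity) this 2
    have c2 : ((C^(n+1)*j₀:ℕ):ℝ)^2 ≤ (2:ℝ)^(2^n) := by
      have := hevb n hNn
      exact_mod_cast (by exact_mod_cast this : (((C^(n+1)*j₀)^2 : ℕ):ℝ) ≤ ((2^(2^n) : ℕ):ℝ))
    have c3 : (2:ℝ)^(2^n) ≤ m (C^n*j₀) ^ (1/((C^n*j₀:ℕ):ℝ)) := by
      refine le_trans ?_ (iter n)
      nlinarith [pow_pos (two_pos (α := ℝ)) (2^n)]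
    have c5 : M (C^n*j₀) ^ (1/((C^n*j₀:ℕ):ℝ)) ≤ M j ^ (1/(j:ℝ)) := gmono hPn
    calc ((j:ℝ))^2 ≤ ((C^(n+1)*j₀ : ℕ):ℝ)^2 := c1
      _ ≤ (2:ℝ)^(2^n) := c2
      _ ≤ m (C^n*j₀) ^ (1/((C^n*j₀:ℕ):ℝ)) := c3
      _ ≤ M (C^n*j₀) ^ (1/((C^n*j₀:ℕ):ℝ)) := hag _
      _ ≤ M j ^ (1/(j:ℝ)) := c5
  obtain ⟨J, hkey⟩ : ∃ J : ℕ, ∀ j : ℕ, J ≤ j → ((j:ℝ))^2 ≤ M j ^ (1/(j:ℝ)) :=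
    ⟨C^N * j₀, keybound⟩
  clear keybound
  -- part 1
  have hsq : Summable (fun j : ℕ => 1/((j:ℝ)+1)^2) := by
    have hbase : Summable (fun j : ℕ => 1/((j:ℝ))^2) := by
      simpa using Real.summable_one_div_nat_pow.mpr (le_refl 2)
    have := (summable_nat_add_iff 1).mpr hbase
    apply this.congr
    intro j
    push_cast
    ring
  have part1 : Summable (fun j : ℕ => 1 / (M (j + 1)) ^ (1 / ((j : ℝ) + 1))) := by
    rw [← summable_nat_add_iff J]
    apply Summable.of_nonneg_of_le (f := fun j : ℕ => 1/((j:ℝ)+1)^2) ?_ ?_ hsq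
    · intro j
      have := hpos (j + J + 1)
      positivity
    · intro j
      have hb := hkey (j + J + 1) (by omega)
      have hgpos : (0:ℝ) < ((j + J + 1 : ℕ):ℝ)^2 := by positivity
      have hMpos : (0:ℝ) < M (j + J + 1) ^ (1/((j+J+1:ℕ):ℝ)) :=
        Real.rpow_pos_of_pos (hpos _) _
      have hd1 : 1 / M (j + J + 1) ^ (1/((j+J+1:ℕ):ℝ)) ≤ 1/((j+J+1:ℕ):ℝ)^2 :=
        one_div_le_one_div_of_le hgpos hb
      have hd2 : (1:ℝ)/((j+J+1:ℕ):ℝ)^2 ≤ 1/((j:ℝ)+1)^2 := by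
        apply one_div_le_one_div_of_le (by positivity)
        have : ((j:ℝ)+1) ≤ ((j+J+1:ℕ):ℝ) := by push_cast; linarith [Nat.cast_nonneg (α := ℝ) J]
        exact pow_le_pow_left₀ (by positivity) this 2
      refine le_trans (le_of_eq ?_) (hd1.trans hd2)
      push_cast
      norm_num
  refine ⟨part1, ?_⟩
  -- part 2
  apply Summable.of_nonneg_of_le
    (fun j => (div_pos (hpos j) (hpos (j+1))).le) ?_ part1
  intro j
  have key := aux_pow M hpos h0 hlc j
  have h2 : M (j+1) * M j ^ (j+1) ≤ M (j+1) ^ (j+1) := by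
    calc M (j+1) * M j ^ (j+1) ≤ M (j+1) * M (j+1) ^ j :=
          mul_le_mul_of_nonneg_left key (hpos _).le
      _ = M (j+1) ^ (j+1) := by rw [pow_succ]; ring
  have e0 : ((j+1:ℕ):ℝ) ≠ 0 := Nat.cast_ne_zero.mpr (by omega)
  have h3 := Real.rpow_le_rpow (mul_nonneg (hpos _).le (pow_nonneg (hpos _).le _)) h2
    (by positivity : (0:ℝ) ≤ 1/((j+1:ℕ):ℝ))
  rw [Real.mul_rpow (hpos _).le (pow_nonneg (hpos _).le _),
      ← Real.rpow_natCast (M j) (j+1), ← Real.rpow_mul (hpos j).le,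
      mul_one_div_cancel e0, Real.rpow_one,
      ← Real.rpow_natCast (M (j+1)) (j+1), ← Real.rpow_mul (hpos (j+1)).le,
      mul_one_div_cancel e0, Real.rpow_one] at h3
  -- h3 : M (j+1) ^ (1/(j+1)) * M j ≤ M (j+1)
  have hrp : (0:ℝ) < M (j+1) ^ (1/((j:ℝ)+1)) := Real.rpow_pos_of_pos (hpos _) _
  have hcast : ((j+1:ℕ):ℝ) = (j:ℝ)+1 := by push_cast; ring
  rw [hcast] at h3
  rw [div_le_div_iff₀ (hpos (j+1)) hrp]
  calc M j * M (j+1) ^ (1/((j:ℝ)+1)) = M (j+1) ^ (1/((j:ℝ)+1)) * M j := by ring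
    _ ≤ M (j+1) := h3
    _ = 1 * M (j+1) := (one_mul _).symm


end
end

section
/- Let ω : [0,∞) → [0,∞) satisfy (ω0), (ω2), (ω3), (ω4) and liminf_{t→∞} ω(t)/t = 0. If ω satisfies in addition the condition that there exist H, C > 0 with (ω^ι)_⋆(t²) ≤ C·ω(H·t) + C for all t ≥ 0, then ω is non-quasianalytic: ∫_1^∞ ω(t)/t² dt < +∞. -/
open Set Filter Asymptotics MeasureTheory
open scoped BigOperators Topology

noncomputable section

private lemma iotaStar_lower_bound (ω : ℝ → ℝ) (hnn : ∀ t, 0 ≤ ω t)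
    (hm : MonotoneOn ω (Ici 0)) {u r : ℝ} (hu : 0 < u) (hr : 0 ≤ r) :
    min (ω u) (r / u) ≤ iotaStar ω r := by
  unfold iotaStar legendreLow
  have hne : ((fun s => ω (1 / s) + r * s) '' Ioi (0:ℝ)).Nonempty :=
    ⟨_, ⟨1, by norm_num, rfl⟩⟩
  apply le_csInf hne
  rintro x ⟨s, hs, rfl⟩
  simp only [mem_Ioi] at hs
  rcases le_or_gt u (1 / s) with h | h
  · have h1 : ω u ≤ ω (1 / s) := hm (mem_Ici.mpr hu.le) (mem_Ici.mpr (by positivity)) h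
    have h2 : 0 ≤ r * s := by positivity
    calc min (ω u) (r / u) ≤ ω u := min_le_left _ _
      _ ≤ ω (1 / s) + r * s := by linarith
  · have h2 : 1 / u < s := by
      rw [div_lt_iff₀ hu]
      rw [div_lt_iff₀ hs] at h
      nlinarith
    calc min (ω u) (r / u) ≤ r / u := min_le_right _ _
      _ ≤ r * s := by
          rw [div_eq_mul_one_div]
          exact mul_le_mul_of_nonneg_left h2.le hr
      _ ≤ ω (1 / s) + r * s := by linarith [hnn (1 / s)]

/-- If `ω` has (ω0), (ω2), (ω3), (ω4), `liminf ω(t)/t = 0`, and satisfies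
`(ω^ι)_⋆(t²) ≤ C·ω(H·t) + C`, then `ω` is non-quasianalytic. -/
theorem statement19 (ω : ℝ → ℝ) (h0 : IsOmega0 ω) (h2 : Omega2 ω) (h3 : Omega3 ω)
    (h4 : Omega4 ω)
    (hliminf : ∀ ε > (0:ℝ), ∃ᶠ t in atTop, ω t < ε * t)
    (hcond : ∃ H > (0:ℝ), ∃ C > (0:ℝ), ∀ t : ℝ, 0 ≤ t →
      iotaStar ω (t ^ 2) ≤ C * ω (H * t) + C) :
    IntegrableOn (fun t => ω t / t ^ 2) (Ici 1) := by
  obtain ⟨H, hH, C, hC, hcond⟩ := hcond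
  obtain ⟨C', hC'def⟩ : ∃ x : ℝ, x = C + 2 := ⟨_, rfl⟩
  have hC'2 : (2:ℝ) ≤ C' := by linarith
  have hC'0 : (0:ℝ) < C' := by linarith
  obtain ⟨K, hKdef⟩ : ∃ x : ℝ, x = 4 * C' ^ 2 := ⟨_, rfl⟩
  have hK2 : (2:ℝ) ≤ K := by nlinarith
  have hK0 : (0:ℝ) < K := by linarith
  have hKC2 : C' ^ 2 ≤ K := by nlinarith
  have hK2C : 2 * C' ≤ K := by nlinarith
  obtain ⟨ε, hεdef⟩ : ∃ x : ℝ, x = 1 / (2 * C' * H ^ 2 * K) := ⟨_, rfl⟩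
  have hε0 : 0 < ε := by rw [hεdef]; positivity
  obtain ⟨s₀, hs₀good, hs₀big⟩ :=
    ((hliminf ε hε0).and_eventually (eventually_ge_atTop (max (1/ε) 1))).exists
  have hs₀1 : (1:ℝ) ≤ s₀ := le_trans (le_max_right _ _) hs₀big
  have hs₀0 : (0:ℝ) < s₀ := by linarith
  have hs₀ε : 1 ≤ ε * s₀ := by
    have h1 : 1 / ε ≤ s₀ := le_trans (le_max_left _ _) hs₀big
    rw [div_le_iff₀ hε0] at h1
    linarith [h1]
  -- the basic step: at "good" points, ω (K s) ≤ C' ω s + C'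
  have step : ∀ s : ℝ, 1 ≤ s → 1 ≤ ε * s → ω s < ε * s → ω (K * s) ≤ C' * ω s + C' := by
    intro s hs1 hεs hgood
    have hs0 : (0:ℝ) < s := by linarith
    have hCC' : C * ω s ≤ C' * ω s :=
      mul_le_mul_of_nonneg_right (by linarith) (h0.nonneg s)
    have hup : iotaStar ω ((s / H) ^ 2) ≤ C * ω s + C := by
      have h := hcond (s / H) (by positivity)
      rwa [show H * (s / H) = s by field_simp] at h
    have hlow := iotaStar_lower_bound ω h0.nonneg h0.mono
      (u := K * s) (r := (s / H) ^ 2) (by positivity) (by positivity)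
    rcases min_cases (ω (K * s)) ((s / H) ^ 2 / (K * s)) with ⟨heq, _⟩ | ⟨heq, hlt⟩
    · rw [heq] at hlow
      have h1 := hlow.trans hup
      linarith
    · exfalso
      rw [heq] at hlow
      have hH0 : H ≠ 0 := hH.ne'
      have hK0' : K ≠ 0 := hK0.ne'
      have hs0' : s ≠ 0 := hs0.ne'
      have hval : (s / H) ^ 2 / (K * s) = s / (H ^ 2 * K) := by
        field_simp
      rw [hval] at hlow
      have hchain := hlow.trans hup
      have hb1 : C' * ω s < C' * (ε * s) := by
        exact mul_lt_mul_of_pos_left hgood hC'0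
      have hb2 : C' ≤ C' * (ε * s) := le_mul_of_one_le_right hC'0.le hεs
      have h2 : C * ω s + C < 2 * (C' * (ε * s)) := by linarith
      have h3 : 2 * (C' * (ε * s)) = s / (H ^ 2 * K) := by
        rw [hεdef]
        have hC'0' : C' ≠ 0 := hC'0.ne'
        field_simp
      linarith
  -- induction along the chain sₙ = Kⁿ s₀
  have key : ∀ n : ℕ, ω (K ^ n * s₀) < ε * (K ^ n * s₀) ∧
      ω (K ^ n * s₀) + 2 ≤ C' ^ n * (ω s₀ + 2) := by
    intro n
    induction n with
    | zero => refine ⟨by simpa using hs₀good, by simp⟩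
    | succ n ih =>
      have hKn1 : (1:ℝ) ≤ K ^ n := one_le_pow₀ (by linarith)
      have hKn0 : (0:ℝ) < K ^ n := by positivity
      have hs1 : 1 ≤ K ^ n * s₀ := by nlinarith
      have hεs : 1 ≤ ε * (K ^ n * s₀) := by
        have h := mul_le_mul_of_nonneg_left hKn1 (by positivity : (0:ℝ) ≤ ε * s₀)
        nlinarith
      have hstep := step (K ^ n * s₀) hs1 hεs ih.1
      have hKs : K ^ (n + 1) * s₀ = K * (K ^ n * s₀) := by rw [pow_succ]; ring
      constructor
      · rw [hKs]
        have hb1 : C' * ω (K ^ n * s₀) < C' * (ε * (K ^ n * s₀)) :=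
          mul_lt_mul_of_pos_left ih.1 hC'0
        have hb2 : C' ≤ C' * (ε * (K ^ n * s₀)) := le_mul_of_one_le_right hC'0.le hεs
        have h1 : ω (K * (K ^ n * s₀)) < 2 * C' * (ε * (K ^ n * s₀)) := by linarith
        have h2 : 2 * C' * (ε * (K ^ n * s₀)) ≤ K * (ε * (K ^ n * s₀)) :=
          mul_le_mul_of_nonneg_right hK2C (by positivity)
        have h3 : K * (ε * (K ^ n * s₀)) = ε * (K * (K ^ n * s₀)) := by ring
        linarith
      · rw [hKs, pow_succ]
        have h1 := mul_le_mul_of_nonneg_left ih.2 hC'0.le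
        have h2 : C' * (ω (K ^ n * s₀) + 2) = C' * ω (K ^ n * s₀) + 2 * C' := by ring
        have h3 : C' * (C' ^ n * (ω s₀ + 2)) = C' ^ n * C' * (ω s₀ + 2) := by ring
        linarith
  obtain ⟨B, hBdef⟩ : ∃ x : ℝ, x = ω s₀ + 2 := ⟨_, rfl⟩
  have hB0 : (0:ℝ) < B := by have := h0.nonneg s₀; rw [hBdef]; linarith
  -- global bound ω t ≤ C' B √t for t ≥ s₀
  have bound : ∀ t : ℝ, s₀ ≤ t → ω t ≤ C' * B * Real.sqrt t := by
    intro t ht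
    have ht0 : (0:ℝ) < t := by linarith
    obtain ⟨n, hn1, hn2⟩ := exists_nat_pow_near
      (by rw [le_div_iff₀ hs₀0]; simpa using ht : (1:ℝ) ≤ t / s₀) (by linarith : (1:ℝ) < K)
    rw [div_lt_iff₀ hs₀0] at hn2
    rw [le_div_iff₀ hs₀0] at hn1
    have hωt : ω t ≤ ω (K ^ (n + 1) * s₀) :=
      h0.mono (mem_Ici.mpr ht0.le) (mem_Ici.mpr (by positivity)) hn2.le
    have hkey := (key (n + 1)).2
    have hkey' : ω (K ^ (n + 1) * s₀) + 2 ≤ C' ^ (n + 1) * (ω s₀ + 2) := hkey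
    have hCn : C' ^ n ≤ Real.sqrt t := by
      rw [Real.le_sqrt (by positivity) ht0.le]
      calc (C' ^ n) ^ 2 = (C' ^ 2) ^ n := by ring
        _ ≤ K ^ n := pow_le_pow_left₀ (by positivity) hKC2 n
        _ ≤ K ^ n * s₀ := le_mul_of_one_le_right (by positivity) hs₀1
        _ ≤ t := hn1
    have hprod : C' * B * C' ^ n ≤ C' * B * Real.sqrt t :=
      mul_le_mul_of_nonneg_left hCn (by positivity)
    have hexp : C' ^ (n + 1) * B = C' * B * C' ^ n := by ring
    rw [← hBdef] at hkey'
    linarith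
  -- integrability
  rw [show Ici (1:ℝ) = Icc 1 s₀ ∪ Ici s₀ from (Icc_union_Ici_eq_Ici hs₀1).symm]
  apply IntegrableOn.union
  · apply ContinuousOn.integrableOn_compact isCompact_Icc
    apply ContinuousOn.div
    · exact h0.cont.mono (fun x hx => le_trans zero_le_one hx.1)
    · exact (continuous_pow 2).continuousOn
    · intro x hx
      have : (1:ℝ) ≤ x := hx.1
      positivity
  · have hg : IntegrableOn (fun t : ℝ => (C' * B) * t ^ (-(3/2) : ℝ)) (Ici s₀) := by
      have hI := (integrableOn_Ioi_rpow_iff hs₀0).mpr (by norm_num : (-(3/2) : ℝ) < -1)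
      exact Iff.mpr integrableOn_Ici_iff_integrableOn_Ioi (hI.const_mul _)
    apply Integrable.mono' hg
    · apply ContinuousOn.aestronglyMeasurable _ measurableSet_Ici
      apply ContinuousOn.div
      · exact h0.cont.mono (fun x hx => le_trans hs₀0.le hx)
      · exact (continuous_pow 2).continuousOn
      · intro x hx
        have hx0 : (0:ℝ) < x := lt_of_lt_of_le hs₀0 hx
        positivity
    · filter_upwards [ae_restrict_mem measurableSet_Ici] with t ht
      have ht' : s₀ ≤ t := ht
      have ht0 : (0:ℝ) < t := by linarith
      have hb := bound t ht'
      have hnn := h0.nonneg t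
      rw [Real.norm_eq_abs, abs_div, abs_of_nonneg hnn,
        abs_of_nonneg (by positivity : (0:ℝ) ≤ t ^ 2)]
      rw [div_le_iff₀ (by positivity : (0:ℝ) < t ^ 2)]
      have hrw : C' * B * t ^ (-(3/2) : ℝ) * t ^ 2 = C' * B * Real.sqrt t := by
        rw [Real.sqrt_eq_rpow, show (t:ℝ) ^ 2 = t ^ ((2:ℕ):ℝ) from (Real.rpow_natCast t 2).symm,
          mul_assoc, ← Real.rpow_add ht0]
        norm_num
      rw [hrw]
      exact hb

end
end
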